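/- arXiv:1906.09937 — 4 statements merged into one kernel-verified Lean document; each statement's English description precedes it below -/
import Mathlib

section
/- Let X and Y be nonnegative random variables with absolutely continuous distribution functions supported on [0,∞), and let h₁, h₂ be twice differentiable dual distortion functions. Let τ₁(X) and τ₂(Y) be the lifetimes with survival functions h₁(F̄_X(x)) and h₂(F̄_Y(x)), and set H_i(p) = p·h_i'(p)/h_i(p), i=1,2, for p∈(0,1). Suppose (i) H₁(p)/H₂(p) is decreasing in p∈(0,1); (iv) X ≺_{c*} Y and Y ≤_st X; and either (ii) (1−p)·H₁'(p)/H₁(p) is negative and decreasing in p∈(0,1), or (iii) (1−p)·H₂'(p)/H₂(p) is negative and decreasing in p∈(0,1). Then τ₁(X) ≺_{c*} τ₂(Y). -/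
open MeasureTheory Set

/-- Survival (reliability) function of a distribution `μ` on `ℝ`. -/
noncomputable def survival (μ : Measure ℝ) (x : ℝ) : ℝ := (μ (Set.Ioi x)).toReal

/-- `H(p) = p h'(p) / h(p)` associated with a dual distortion function `h`
with derivative `h'`. -/
noncomputable def Hfun (h h' : ℝ → ℝ) (p : ℝ) : ℝ := p * h' p / h p

namespace AgingAux
open Filter Topology

/- ## generic helpers -/

lemma integral_nonneg_Ioo {f : ℝ → ℝ} {a b : ℝ} (hab : a ≤ b)
    (h : ∀ x ∈ Set.Ioo a b, 0 ≤ f x) : 0 ≤ ∫ x in a..b, f x := by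
  rw [intervalIntegral.integral_of_le hab, ← setIntegral_congr_set Ioo_ae_eq_Ioc]
  exact setIntegral_nonneg measurableSet_Ioo h

lemma const_of_deriv_zero {f f' : ℝ → ℝ} {a b : ℝ} (hab : a ≤ b)
    (hc : ContinuousOn f (Set.Icc a b))
    (hd : ∀ x ∈ Set.Ioo a b, HasDerivAt f (f' x) x)
    (h0 : ∀ x ∈ Set.Ioo a b, f' x = 0) : f b = f a := by
  have hdiff : DifferentiableOn ℝ f (interior (Set.Icc a b)) := by
    rw [interior_Icc]; exact fun x hx => (hd x hx).differentiableAt.differentiableWithinAt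
  have hder : ∀ x ∈ interior (Set.Icc a b), deriv f x = 0 := by
    rw [interior_Icc]; intro x hx; rw [(hd x hx).deriv]; exact h0 x hx
  have h1 := monotoneOn_of_deriv_nonneg (convex_Icc a b) hc hdiff (fun x hx => (hder x hx).ge)
  have h2 := antitoneOn_of_deriv_nonpos (convex_Icc a b) hc hdiff (fun x hx => (hder x hx).le)
  exact le_antisymm (h2 (left_mem_Icc.2 hab) (right_mem_Icc.2 hab) hab)
    (h1 (left_mem_Icc.2 hab) (right_mem_Icc.2 hab) hab)

lemma const_on_Ioo {f f' : ℝ → ℝ} {a b : ℝ}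
    (hd : ∀ x ∈ Set.Ioo a b, HasDerivAt f (f' x) x)
    (hz : ∀ x ∈ Set.Ioo a b, f' x = 0) :
    ∀ {x y}, x ∈ Set.Ioo a b → y ∈ Set.Ioo a b → f x = f y := by
  have key : ∀ {x y}, x ∈ Set.Ioo a b → y ∈ Set.Ioo a b → x ≤ y → f y = f x := by
    intro x y hx hy hxy
    have hsub : Set.Icc x y ⊆ Set.Ioo a b := fun t ht => ⟨lt_of_lt_of_le hx.1 ht.1,
      lt_of_le_of_lt ht.2 hy.2⟩
    have hsub' : Set.Ioo x y ⊆ Set.Ioo a b := fun t ht => hsub ⟨ht.1.le, ht.2.le⟩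
    exact const_of_deriv_zero hxy
      (fun t ht => (hd t (hsub ht)).continuousAt.continuousWithinAt)
      (fun t ht => hd t (hsub' ht)) (fun t ht => hz t (hsub' ht))
  intro x y hx hy
  rcases le_total x y with hle | hle
  · exact (key hx hy hle).symm
  · exact key hy hx hle

lemma left_lim_const {f : ℝ → ℝ} {s : Set ℝ} {a b v : ℝ} (hab : a < b)
    (hcont : ContinuousWithinAt f s a) (hsub : Set.Ioo a b ⊆ s)
    (hconst : ∀ x ∈ Set.Ioo a b, f x = v) : f a = v := by
  have h3 : Tendsto f (𝓝[Set.Ioo a b] a) (𝓝 (f a)) :=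
    hcont.mono_left (nhdsWithin_mono _ hsub)
  have h4 : Tendsto f (𝓝[Set.Ioo a b] a) (𝓝 v) := by
    apply Tendsto.congr' _ tendsto_const_nhds
    filter_upwards [eventually_mem_nhdsWithin] with x hx
    exact (hconst x hx).symm
  have := left_nhdsWithin_Ioo_neBot hab
  exact tendsto_nhds_unique h3 h4

lemma right_lim_const {f : ℝ → ℝ} {s : Set ℝ} {a b v : ℝ} (hab : a < b)
    (hcont : ContinuousWithinAt f s b) (hsub : Set.Ioo a b ⊆ s)
    (hconst : ∀ x ∈ Set.Ioo a b, f x = v) : f b = v := by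
  have h3 : Tendsto f (𝓝[Set.Ioo a b] b) (𝓝 (f b)) :=
    hcont.mono_left (nhdsWithin_mono _ hsub)
  have h4 : Tendsto f (𝓝[Set.Ioo a b] b) (𝓝 v) := by
    apply Tendsto.congr' _ tendsto_const_nhds
    filter_upwards [eventually_mem_nhdsWithin] with x hx
    exact (hconst x hx).symm
  have := right_nhdsWithin_Ioo_neBot hab
  exact tendsto_nhds_unique h3 h4

lemma left_lim_ge {f : ℝ → ℝ} {s : Set ℝ} {a b v : ℝ} (hab : a < b)
    (hcont : ContinuousWithinAt f s a) (hsub : Set.Ioo a b ⊆ s)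
    (hge : ∀ x ∈ Set.Ioo a b, v ≤ f x) : v ≤ f a := by
  have h3 : Tendsto f (𝓝[Set.Ioo a b] a) (𝓝 (f a)) :=
    hcont.mono_left (nhdsWithin_mono _ hsub)
  have := left_nhdsWithin_Ioo_neBot hab
  refine ge_of_tendsto h3 ?_
  filter_upwards [eventually_mem_nhdsWithin] with x hx
  exact hge x hx

lemma right_lim_le {f : ℝ → ℝ} {s : Set ℝ} {a b v : ℝ} (hab : a < b)
    (hcont : ContinuousWithinAt f s b) (hsub : Set.Ioo a b ⊆ s)
    (hle : ∀ x ∈ Set.Ioo a b, f x ≤ v) : f b ≤ v := by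
  have h3 : Tendsto f (𝓝[Set.Ioo a b] b) (𝓝 (f b)) :=
    hcont.mono_left (nhdsWithin_mono _ hsub)
  have := right_nhdsWithin_Ioo_neBot hab
  refine le_of_tendsto h3 ?_
  filter_upwards [eventually_mem_nhdsWithin] with x hx
  exact hle x hx

/-- `a (e^t - 1) ≤ e^(a t) - 1` for `a ≥ 1`, `t ≥ 0`. -/
lemma exp_aux {a t : ℝ} (ha : 1 ≤ a) (ht : 0 ≤ t) :
    a * (Real.exp t - 1) ≤ Real.exp (a * t) - 1 := by
  have key : MonotoneOn (fun t => Real.exp (a * t) - 1 - a * (Real.exp t - 1)) (Set.Ici 0) := by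
    apply monotoneOn_of_deriv_nonneg (convex_Ici 0)
    · fun_prop
    · rw [interior_Ici]; fun_prop
    · intro x hx
      rw [interior_Ici] at hx
      have hd : HasDerivAt (fun t => Real.exp (a * t) - 1 - a * (Real.exp t - 1))
          (Real.exp (a * x) * a - a * Real.exp x) x := by
        have h1 : HasDerivAt (fun t : ℝ => a * t) a x := by
          simpa using (hasDerivAt_id x).const_mul a
        have := (Real.hasDerivAt_exp (a * x)).comp x h1
        exact ((this.sub_const 1).sub (((Real.hasDerivAt_exp x).sub_const 1).const_mul a))
      rw [hd.deriv]
      have : Real.exp x ≤ Real.exp (a * x) := by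
        apply Real.exp_le_exp.2; nlinarith [(Set.mem_Ioi.1 hx).le]
      nlinarith [Real.exp_pos x]
  have h0 := key (le_refl (0:ℝ)) ht ht
  simp at h0
  nlinarith

/- ## distortion function basics -/

/-- the quantity in conditions (ii)/(iii) -/
noncomputable def expr (h h' : ℝ → ℝ) (p : ℝ) : ℝ :=
  (1 - p) * deriv (Hfun h h') p / Hfun h h' p

def kCond (h h' : ℝ → ℝ) : Prop :=
  (∀ p ∈ Set.Ioo (0:ℝ) 1, expr h h' p ≤ 0) ∧ AntitoneOn (expr h h') (Set.Ioo 0 1)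

section Distortion
variable {h h' h'' : ℝ → ℝ}

lemma h'_nonneg (hmono : MonotoneOn h (Set.Icc 0 1))
    (hd : ∀ p ∈ Set.Icc (0:ℝ) 1, HasDerivAt h (h' p) p)
    {p : ℝ} (hp : p ∈ Set.Ioo (0:ℝ) 1) : 0 ≤ h' p := by
  have hden := hd p (Ioo_subset_Icc_self hp)
  have hs := hasDerivAt_iff_tendsto_slope.1 hden
  have hs' : Filter.Tendsto (slope h p) (nhdsWithin p (Set.Ioi p)) (nhds (h' p)) :=
    hs.mono_left (nhdsWithin_mono p (fun x hx => hx.ne'))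
  have hne : (nhdsWithin p (Set.Ioi p)).NeBot := inferInstance
  refine ge_of_tendsto hs' ?_
  filter_upwards [Ioo_mem_nhdsGT_of_mem ⟨le_refl p, hp.2⟩] with x hx
  have h1 : h p ≤ h x := hmono (Ioo_subset_Icc_self hp)
    ⟨(hp.1.trans hx.1).le, hx.2.le⟩ hx.1.le
  have h2 : 0 < x - p := by linarith [hx.1]
  rw [slope_def_field]
  exact div_nonneg (by linarith) h2.le

lemma h_nonneg (hmap : Set.MapsTo h (Set.Icc 0 1) (Set.Icc 0 1))
    {p : ℝ} (hp : p ∈ Set.Icc (0:ℝ) 1) : 0 ≤ h p := (hmap hp).1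

lemma h_le_one (hmap : Set.MapsTo h (Set.Icc 0 1) (Set.Icc 0 1))
    {p : ℝ} (hp : p ∈ Set.Icc (0:ℝ) 1) : h p ≤ 1 := (hmap hp).2

lemma Hfun_nonneg (hmap : Set.MapsTo h (Set.Icc 0 1) (Set.Icc 0 1))
    (hmono : MonotoneOn h (Set.Icc 0 1))
    (hd : ∀ p ∈ Set.Icc (0:ℝ) 1, HasDerivAt h (h' p) p)
    {p : ℝ} (hp : p ∈ Set.Ioo (0:ℝ) 1) : 0 ≤ Hfun h h' p :=
  div_nonneg (mul_nonneg hp.1.le (h'_nonneg hmono hd hp))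
    (h_nonneg hmap (Ioo_subset_Icc_self hp))

lemma hasDerivAt_Hfun
    (hd : ∀ p ∈ Set.Icc (0:ℝ) 1, HasDerivAt h (h' p) p)
    (hdd : ∀ p ∈ Set.Icc (0:ℝ) 1, HasDerivAt h' (h'' p) p)
    {p : ℝ} (hp : p ∈ Set.Icc (0:ℝ) 1) (hne : h p ≠ 0) :
    HasDerivAt (Hfun h h') (deriv (Hfun h h') p) p := by
  have hD : HasDerivAt (Hfun h h')
      (((1 * h' p + p * h'' p) * h p - p * h' p * h' p) / h p ^ 2) p := by
    exact ((hasDerivAt_id p).mul (hdd p hp)).div (hd p hp) hne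
  exact hD.deriv ▸ hD

lemma continuousAt_Hfun
    (hd : ∀ p ∈ Set.Icc (0:ℝ) 1, HasDerivAt h (h' p) p)
    (hdd : ∀ p ∈ Set.Icc (0:ℝ) 1, HasDerivAt h' (h'' p) p)
    {p : ℝ} (hp : p ∈ Set.Icc (0:ℝ) 1) (hne : h p ≠ 0) :
    ContinuousAt (Hfun h h') p := by
  exact (continuousAt_id.mul (hdd p hp).differentiableAt.continuousAt).div
    (hd p hp).differentiableAt.continuousAt hne

lemma deriv_Hfun_eq_zero {p : ℝ} (hp : p ∈ Set.Ioo (0:ℝ) 1) (hne : Hfun h h' p ≠ 0)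
    (hz : expr h h' p = 0) : deriv (Hfun h h') p = 0 := by
  unfold expr at hz
  have h1p : (1 : ℝ) - p ≠ 0 := by have := hp.2; intro hh; linarith [sub_eq_zero.1 hh]
  rcases div_eq_zero_iff.1 hz with hz | hz
  · rcases mul_eq_zero.1 hz with hz | hz
    · exact absurd hz h1p
    · exact hz
  · exact absurd hz hne

end Distortion

section Distortion2
variable {h h' h'' : ℝ → ℝ}

lemma zero_sup (hmap : Set.MapsTo h (Set.Icc 0 1) (Set.Icc 0 1))
    (hmono : MonotoneOn h (Set.Icc 0 1))
    (hcont : ContinuousOn h (Set.Icc 0 1))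
    (h1 : h 1 = 1)
    {c : ℝ} (hc : c ∈ Set.Ico (0:ℝ) 1) (hc0 : h c = 0) :
    ∃ a, a ∈ Set.Ico c 1 ∧ h a = 0 ∧ ∀ p ∈ Set.Ioo a 1, 0 < h p := by
  set Z := {p : ℝ | p ∈ Set.Icc (0:ℝ) 1 ∧ h p = 0} with hZ
  have hcZ : c ∈ Z := ⟨⟨hc.1, hc.2.le⟩, hc0⟩
  have hbdd : BddAbove Z := ⟨1, fun z hz => hz.1.2⟩
  set a := sSup Z with ha
  have hca : c ≤ a := le_csSup hbdd hcZ
  have ha1 : a ≤ 1 := csSup_le ⟨c, hcZ⟩ (fun z hz => hz.1.2)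
  have haIcc : a ∈ Set.Icc (0:ℝ) 1 := ⟨hc.1.trans hca, ha1⟩
  have hzero : ∀ p, 0 ≤ p → p < a → h p = 0 := by
    intro p hp0 hpa
    obtain ⟨z, hzZ, hpz⟩ := exists_lt_of_lt_csSup ⟨c, hcZ⟩ hpa
    have h1' : h p ≤ h z := hmono ⟨hp0, hpz.le.trans hzZ.1.2⟩ hzZ.1 hpz.le
    have h2' : 0 ≤ h p := h_nonneg hmap ⟨hp0, hpz.le.trans hzZ.1.2⟩
    rw [hzZ.2] at h1'; linarith
  have ha0 : h a = 0 := by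
    rcases eq_or_lt_of_le hca with he | hlt
    · rw [← he]; exact hc0
    · exact right_lim_const hlt (hcont a haIcc)
        (fun t ht => ⟨hc.1.trans ht.1.le, ht.2.le.trans ha1⟩)
        (fun t ht => hzero t (hc.1.trans ht.1.le) ht.2)
  have ha1' : a < 1 := lt_of_le_of_ne ha1 (fun he => by rw [he, h1] at ha0; norm_num at ha0)
  refine ⟨a, ⟨hca, ha1'⟩, ha0, ?_⟩
  intro p hp
  have hp1 : p ∈ Set.Icc (0:ℝ) 1 := ⟨(hc.1.trans (hca.trans hp.1.le)), hp.2.le⟩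
  have hne : h p ≠ 0 := by
    intro h0'
    exact absurd (le_csSup hbdd ⟨hp1, h0'⟩) (not_le.2 hp.1)
  exact lt_of_le_of_ne (h_nonneg hmap hp1) (Ne.symm hne)

lemma flat_contra (hmap : Set.MapsTo h (Set.Icc 0 1) (Set.Icc 0 1))
    (hmono : MonotoneOn h (Set.Icc 0 1))
    (hcont : ContinuousOn h (Set.Icc 0 1))
    (h1 : h 1 = 1)
    (hd : ∀ p ∈ Set.Icc (0:ℝ) 1, HasDerivAt h (h' p) p)
    {a : ℝ} (ha : a ∈ Set.Ico (0:ℝ) 1) (h0a : h a = 0)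
    (hH : ∀ p ∈ Set.Ioo a 1, Hfun h h' p = 0) : False := by
  obtain ⟨b, hb, hb0, hbpos⟩ := zero_sup hmap hmono hcont h1 ha h0a
  have hb0le : (0:ℝ) ≤ b := ha.1.trans hb.1
  have hsub : Set.Ioo b 1 ⊆ Set.Ioo a 1 := fun t ht => ⟨lt_of_le_of_lt hb.1 ht.1, ht.2⟩
  have h'0 : ∀ p ∈ Set.Ioo b 1, h' p = 0 := by
    intro p hp
    have hp0 : (0:ℝ) < p := lt_of_le_of_lt hb0le hp.1
    have hph : h p ≠ 0 := ne_of_gt (hbpos p hp)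
    have hh := hH p (hsub hp)
    unfold Hfun at hh
    rcases div_eq_zero_iff.1 hh with h2 | h2
    · rcases mul_eq_zero.1 h2 with h3 | h3
      · exact absurd h3 (ne_of_gt hp0)
      · exact h3
    · exact absurd h2 hph
  set m := (b + 1)/2 with hm
  have hmI : m ∈ Set.Ioo b 1 := ⟨by simp only [hm]; linarith [hb.2], by simp only [hm]; linarith [hb.2]⟩
  have hIccsub : Set.Ioo b 1 ⊆ Set.Icc (0:ℝ) 1 := fun t ht => ⟨hb0le.trans ht.1.le, ht.2.le⟩
  have hconst2 : ∀ x ∈ Set.Ioo b 1, h x = h m := fun x hx =>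
    const_on_Ioo (fun t ht => hd t (hIccsub ht)) h'0 hx hmI
  have hval1 : h 1 = h m := right_lim_const hb.2 (hcont 1 (right_mem_Icc.2 zero_le_one))
    hIccsub hconst2
  have hvalb : h b = h m := left_lim_const hb.2 (hcont b ⟨hb0le, hb.2.le⟩) hIccsub hconst2
  rw [h1] at hval1
  rw [hb0] at hvalb
  rw [← hval1] at hvalb
  norm_num at hvalb

lemma no_H_zero (hmap : Set.MapsTo h (Set.Icc 0 1) (Set.Icc 0 1))
    (hmono : MonotoneOn h (Set.Icc 0 1))
    (hcont : ContinuousOn h (Set.Icc 0 1))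
    (hd : ∀ p ∈ Set.Icc (0:ℝ) 1, HasDerivAt h (h' p) p)
    (hdd : ∀ p ∈ Set.Icc (0:ℝ) 1, HasDerivAt h' (h'' p) p)
    (hk : kCond h h')
    {a z : ℝ} (ha : a ∈ Set.Ico (0:ℝ) 1) (h0a : h a = 0)
    (hposa : ∀ p ∈ Set.Ioo a 1, 0 < h p)
    (hz : z ∈ Set.Ioo a 1) (hHz : Hfun h h' z = 0) : False := by
  have hzIoo : z ∈ Set.Ioo (0:ℝ) 1 := ⟨lt_of_le_of_lt ha.1 hz.1, hz.2⟩
  have exprz : expr h h' z = 0 := by unfold expr; rw [hHz, div_zero]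
  have expr0 : ∀ p ∈ Set.Ioo (0:ℝ) 1, p ≤ z → expr h h' p = 0 := by
    intro p hp hpz
    have h2 := hk.2 hp hzIoo hpz
    rw [exprz] at h2
    exact le_antisymm (hk.1 p hp) h2
  have hS : ∀ w ∈ Set.Ioo a z, Hfun h h' w = 0 := by
    intro w hw
    by_contra hwne
    have hwI : w ∈ Set.Ioo (0:ℝ) 1 := ⟨lt_of_le_of_lt ha.1 hw.1, hw.2.trans hz.2⟩
    set T := {p : ℝ | p ∈ Set.Icc w z ∧ Hfun h h' p = 0} with hT
    have hzT : z ∈ T := ⟨⟨hw.2.le, le_refl z⟩, hHz⟩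
    have hbdd : BddBelow T := ⟨w, fun t ht => ht.1.1⟩
    set β := sInf T with hβ
    have hwβ : w ≤ β := le_csInf ⟨z, hzT⟩ (fun t ht => ht.1.1)
    have hβz : β ≤ z := csInf_le hbdd hzT
    have hposIcc : ∀ p ∈ Set.Icc w z, 0 < h p ∧ p ∈ Set.Icc (0:ℝ) 1 := by
      intro p hp
      have hpI : p ∈ Set.Ioo a 1 := ⟨lt_of_lt_of_le hw.1 hp.1, lt_of_le_of_lt hp.2 hz.2⟩
      exact ⟨hposa p hpI, ⟨(lt_of_le_of_lt ha.1 hpI.1).le, hpI.2.le⟩⟩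
    have hβmem : β ∈ Set.Icc w z := ⟨hwβ, hβz⟩
    have hβT : Hfun h h' β = 0 := by
      by_contra hβne
      have hcβ : ContinuousAt (Hfun h h') β :=
        continuousAt_Hfun hd hdd (hposIcc β hβmem).2 (ne_of_gt (hposIcc β hβmem).1)
      have hev : ∀ᶠ x in nhds β, Hfun h h' x ≠ 0 := hcβ.eventually_ne hβne
      rcases Metric.eventually_nhds_iff.1 hev with ⟨ε, hε, hball⟩
      obtain ⟨t, htT, htβ⟩ := exists_lt_of_csInf_lt ⟨z, hzT⟩ (show sInf T < β + ε by linarith)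
      have hβt : β ≤ t := csInf_le hbdd htT
      have hd' : dist t β < ε := by
        rw [Real.dist_eq, abs_of_nonneg (by linarith)]
        linarith
      exact hball hd' htT.2
    have hwβ' : w < β := lt_of_le_of_ne hwβ (fun he => hwne (by rw [he]; exact hβT))
    have hTpos : ∀ p ∈ Set.Ico w β, Hfun h h' p ≠ 0 := by
      intro p hp hp0
      exact absurd (csInf_le hbdd ⟨⟨hp.1, hp.2.le.trans hβz⟩, hp0⟩) (not_le.2 hp.2)
    have hder0 : ∀ p ∈ Set.Ioo w β, deriv (Hfun h h') p = 0 := by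
      intro p hp
      have hpIoo : p ∈ Set.Ioo (0:ℝ) 1 :=
        ⟨lt_trans hwI.1 hp.1, lt_of_lt_of_le hp.2 (hβz.trans hzIoo.2.le)⟩
      exact deriv_Hfun_eq_zero hpIoo (hTpos p ⟨hp.1.le, hp.2⟩)
        (expr0 p hpIoo (hp.2.le.trans hβz))
    have hconst : Hfun h h' β = Hfun h h' w := by
      apply const_of_deriv_zero hwβ'.le
      · intro t ht
        have htwz : t ∈ Set.Icc w z := ⟨ht.1, ht.2.trans hβz⟩
        exact (continuousAt_Hfun hd hdd (hposIcc t htwz).2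
          (ne_of_gt (hposIcc t htwz).1)).continuousWithinAt
      · intro t ht
        have htwz : t ∈ Set.Icc w z := ⟨ht.1.le, ht.2.le.trans hβz⟩
        exact hasDerivAt_Hfun hd hdd (hposIcc t htwz).2 (ne_of_gt (hposIcc t htwz).1)
      · exact hder0
    rw [hβT] at hconst
    exact hwne hconst.symm
  have h'0 : ∀ p ∈ Set.Ioo a z, h' p = 0 := by
    intro p hp
    have hp0 : (0:ℝ) < p := lt_of_le_of_lt ha.1 hp.1
    have hph : h p ≠ 0 := ne_of_gt (hposa p ⟨hp.1, hp.2.trans hz.2⟩)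
    have hh := hS p hp
    unfold Hfun at hh
    rcases div_eq_zero_iff.1 hh with h2 | h2
    · rcases mul_eq_zero.1 h2 with h3 | h3
      · exact absurd h3 (ne_of_gt hp0)
      · exact h3
    · exact absurd h2 hph
  have haz : a < z := hz.1
  set m := (a + z)/2 with hm
  have hmI : m ∈ Set.Ioo a z := ⟨by simp only [hm]; linarith, by simp only [hm]; linarith⟩
  have hIccsub : Set.Ioo a z ⊆ Set.Icc (0:ℝ) 1 := fun t ht =>
    ⟨(lt_of_le_of_lt ha.1 ht.1).le, (ht.2.trans hz.2).le⟩
  have hconst2 : ∀ x ∈ Set.Ioo a z, h x = h m := fun x hx =>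
    const_on_Ioo (fun t ht => hd t (hIccsub ht)) h'0 hx hmI
  have hvala : h a = h m := left_lim_const haz (hcont a ⟨ha.1, ha.2.le⟩) hIccsub hconst2
  rw [h0a] at hvala
  exact absurd hvala.symm (ne_of_gt (hposa m ⟨hmI.1, hmI.2.trans hz.2⟩))

end Distortion2


lemma monoOn_Icc {f f' : ℝ → ℝ} {a b : ℝ}
    (hd : ∀ x ∈ Set.Icc a b, HasDerivAt f (f' x) x)
    (h0 : ∀ x ∈ Set.Ioo a b, 0 ≤ f' x) : MonotoneOn f (Set.Icc a b) := by
  apply monotoneOn_of_deriv_nonneg (convex_Icc a b)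
  · exact fun x hx => (hd x hx).continuousAt.continuousWithinAt
  · rw [interior_Icc]
    exact fun x hx => (hd x (Ioo_subset_Icc_self hx)).differentiableAt.differentiableWithinAt
  · rw [interior_Icc]
    intro x hx
    rw [(hd x (Ioo_subset_Icc_self hx)).deriv]
    exact h0 x hx

lemma antiOn_Icc {f f' : ℝ → ℝ} {a b : ℝ}
    (hd : ∀ x ∈ Set.Icc a b, HasDerivAt f (f' x) x)
    (h0 : ∀ x ∈ Set.Ioo a b, f' x ≤ 0) : AntitoneOn f (Set.Icc a b) := by
  apply antitoneOn_of_deriv_nonpos (convex_Icc a b)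
  · exact fun x hx => (hd x hx).continuousAt.continuousWithinAt
  · rw [interior_Icc]
    exact fun x hx => (hd x (Ioo_subset_Icc_self hx)).differentiableAt.differentiableWithinAt
  · rw [interior_Icc]
    intro x hx
    rw [(hd x (Ioo_subset_Icc_self hx)).deriv]
    exact h0 x hx

section Positivity
variable {h h' h'' : ℝ → ℝ}

lemma h_and_H_pos (hmap : Set.MapsTo h (Set.Icc 0 1) (Set.Icc 0 1))
    (hmono : MonotoneOn h (Set.Icc 0 1))
    (hcont : ContinuousOn h (Set.Icc 0 1))
    (h0 : h 0 = 0) (h1 : h 1 = 1)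
    (hd : ∀ p ∈ Set.Icc (0:ℝ) 1, HasDerivAt h (h' p) p)
    (hdd : ∀ p ∈ Set.Icc (0:ℝ) 1, HasDerivAt h' (h'' p) p)
    (hk : kCond h h') :
    (∀ p ∈ Set.Ioo (0:ℝ) 1, 0 < h p) ∧ (∀ p ∈ Set.Ioo (0:ℝ) 1, 0 < Hfun h h' p) := by
  have hpos : ∀ p ∈ Set.Ioo (0:ℝ) 1, 0 < h p := by
    by_contra hcon
    push_neg at hcon
    obtain ⟨c, hc, hc0'⟩ := hcon
    have hc0 : h c = 0 := le_antisymm hc0' (h_nonneg hmap (Ioo_subset_Icc_self hc))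
    obtain ⟨a, haI, ha0, hapos⟩ := zero_sup hmap hmono hcont h1 ⟨hc.1.le, hc.2⟩ hc0
    have ha0lt : 0 < a := lt_of_lt_of_le hc.1 haI.1
    have haIco : a ∈ Set.Ico (0:ℝ) 1 := ⟨ha0lt.le, haI.2⟩
    have hHpos : ∀ p ∈ Set.Ioo a 1, 0 < Hfun h h' p := by
      intro p hp
      have hpI : p ∈ Set.Ioo (0:ℝ) 1 := ⟨lt_trans ha0lt hp.1, hp.2⟩
      rcases (Hfun_nonneg hmap hmono hd hpI).lt_or_eq with hlt | heq
      · exact hlt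
      · exact absurd (no_H_zero hmap hmono hcont hd hdd hk haIco ha0 hapos hp heq.symm) id
    set m := (a+1)/2 with hmdef
    have hmI : m ∈ Set.Ioo a 1 := ⟨by simp only [hmdef]; linarith [haI.2], by simp only [hmdef]; linarith [haI.2]⟩
    have hmI' : m ∈ Set.Ioo (0:ℝ) 1 := ⟨lt_trans ha0lt hmI.1, hmI.2⟩
    set C := -(expr h h' m)/(1-m) with hC
    have h1m : (0:ℝ) < 1 - m := by linarith [hmI.2]
    have hC0 : 0 ≤ C := div_nonneg (neg_nonneg.2 (hk.1 m hmI')) h1m.le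
    have hlinexp : ∀ t : ℝ, HasDerivAt (fun y : ℝ => Real.exp (C * y)) (Real.exp (C * t) * C) t := by
      intro t
      have hlin : HasDerivAt (fun y : ℝ => C * y) C t := by simpa using (hasDerivAt_id t).const_mul C
      exact (Real.hasDerivAt_exp (C*t)).comp t hlin
    have hder_ge : ∀ p ∈ Set.Ioo a m, -C * Hfun h h' p ≤ deriv (Hfun h h') p := by
      intro p hp
      have hpI : p ∈ Set.Ioo (0:ℝ) 1 := ⟨lt_trans ha0lt hp.1, lt_trans hp.2 hmI.2⟩
      have hH := hHpos p ⟨hp.1, hpI.2⟩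
      have hanti : expr h h' m ≤ expr h h' p := hk.2 hpI hmI' hp.2.le
      have h1p : (0:ℝ) < 1 - p := by linarith [hpI.2]
      have hdeq : deriv (Hfun h h') p = expr h h' p * Hfun h h' p / (1 - p) := by
        unfold expr
        field_simp
      rw [hdeq]
      have hem : expr h h' m ≤ 0 := hk.1 m hmI'
      have hep : expr h h' p ≤ 0 := hk.1 p hpI
      have key : expr h h' m / (1-m) ≤ expr h h' p / (1-p) := by
        rw [div_le_div_iff₀ h1m h1p]
        nlinarith [mul_nonneg (sub_nonneg.2 hanti) h1m.le,
          mul_nonneg (neg_nonneg.2 hem) (show (0:ℝ) ≤ m - p by linarith [hp.2])]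
      have hCm : -C = expr h h' m / (1-m) := by rw [hC]; ring
      rw [hCm]
      calc expr h h' m / (1-m) * Hfun h h' p
          ≤ expr h h' p / (1-p) * Hfun h h' p := mul_le_mul_of_nonneg_right key hH.le
        _ = expr h h' p * Hfun h h' p / (1-p) := by ring
    set M := Hfun h h' m * Real.exp C with hM
    have hM0 : 0 ≤ M := mul_nonneg (hHpos m hmI).le (Real.exp_pos C).le
    have hbound : ∀ x ∈ Set.Ioo a m, Hfun h h' x ≤ M := by
      intro x hx
      have hxI : x ∈ Set.Ioo (0:ℝ) 1 := ⟨lt_trans ha0lt hx.1, lt_trans hx.2 hmI.2⟩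
      have hφ : MonotoneOn (fun p => Hfun h h' p * Real.exp (C*p)) (Set.Icc x m) := by
        apply monoOn_Icc (f' := fun p =>
          deriv (Hfun h h') p * Real.exp (C*p) + Hfun h h' p * (Real.exp (C*p) * C))
        · intro t ht
          have htI : t ∈ Set.Ioo (0:ℝ) 1 :=
            ⟨lt_of_lt_of_le hxI.1 ht.1, lt_of_le_of_lt ht.2 hmI.2⟩
          have hne : h t ≠ 0 := ne_of_gt (hapos t ⟨lt_of_lt_of_le hx.1 ht.1, htI.2⟩)
          exact (hasDerivAt_Hfun hd hdd (Ioo_subset_Icc_self htI) hne).mul (hlinexp t)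
        · intro t ht
          have hι : t ∈ Set.Ioo a m := ⟨lt_trans hx.1 ht.1, ht.2⟩
          have hge := hder_ge t hι
          have hHt := (hHpos t ⟨hι.1, lt_trans hι.2 hmI.2⟩).le
          nlinarith [Real.exp_pos (C*t)]
      have hmono2 := hφ (left_mem_Icc.2 hx.2.le) (right_mem_Icc.2 hx.2.le) hx.2.le
      have hex1 : Real.exp (C*m) ≤ Real.exp C := Real.exp_le_exp.2 (by nlinarith [hmI.2])
      have hex2 : (1:ℝ) ≤ Real.exp (C*x) := by
        rw [show (1:ℝ) = Real.exp 0 by simp]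
        exact Real.exp_le_exp.2 (mul_nonneg hC0 hxI.1.le)
      have hHx := (hHpos x ⟨hx.1, hxI.2⟩).le
      have hHm := (hHpos m hmI).le
      dsimp only at hmono2
      have t1 : Hfun h h' x * 1 ≤ Hfun h h' x * Real.exp (C*x) := mul_le_mul_of_nonneg_left hex2 hHx
      rw [mul_one] at t1
      have t2 : Hfun h h' m * Real.exp (C*m) ≤ Hfun h h' m * Real.exp C := mul_le_mul_of_nonneg_left hex1 hHm
      simp only [hM]
      linarith [mul_comm (Hfun h h' x) (Real.exp (C*x)), mul_comm (Hfun h h' m) (Real.exp (C*m))]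
    set D := M/a with hD
    have hD0 : 0 ≤ D := div_nonneg hM0 ha0lt.le
    have hexpD : ∀ t : ℝ, HasDerivAt (fun y : ℝ => Real.exp (-D * y)) (Real.exp (-D * t) * (-D)) t := by
      intro t
      have hlin : HasDerivAt (fun y : ℝ => -D * y) (-D) t := by simpa using (hasDerivAt_id t).const_mul (-D)
      exact (Real.hasDerivAt_exp (-D*t)).comp t hlin
    have hbound2 : ∀ p ∈ Set.Ioo a m, h' p ≤ D * h p := by
      intro p hp
      have hpI : p ∈ Set.Ioo (0:ℝ) 1 := ⟨lt_trans ha0lt hp.1, lt_trans hp.2 hmI.2⟩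
      have hhp : 0 < h p := hapos p ⟨hp.1, hpI.2⟩
      have heq : Hfun h h' p * h p = p * h' p := by
        unfold Hfun; field_simp
      have hHb := hbound p hp
      have h'nn := h'_nonneg hmono hd hpI
      have hint : a * h' p ≤ M * h p := by
        nlinarith [hp.1.le, hpI.1]
      rw [hD, div_mul_eq_mul_div, le_div_iff₀ ha0lt]
      linarith
    have hεpos : 0 < h m * Real.exp (-D) := mul_pos (hapos m hmI) (Real.exp_pos _)
    have hlow : ∀ x ∈ Set.Ioo a m, h m * Real.exp (-D) ≤ h x := by
      intro x hx
      have hxI : x ∈ Set.Ioo (0:ℝ) 1 := ⟨lt_trans ha0lt hx.1, lt_trans hx.2 hmI.2⟩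
      have hχ : AntitoneOn (fun p => h p * Real.exp (-D*p)) (Set.Icc x m) := by
        apply antiOn_Icc (f' := fun p => h' p * Real.exp (-D*p) + h p * (Real.exp (-D*p) * (-D)))
        · intro t ht
          have htI : t ∈ Set.Icc (0:ℝ) 1 :=
            ⟨(lt_of_lt_of_le hxI.1 ht.1).le, (lt_of_le_of_lt ht.2 hmI.2).le⟩
          exact (hd t htI).mul (hexpD t)
        · intro t ht
          have hι : t ∈ Set.Ioo a m := ⟨lt_trans hx.1 ht.1, ht.2⟩
          have hb2 := hbound2 t hι
          nlinarith [Real.exp_pos (-D*t)]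
      have hanti2 := hχ (left_mem_Icc.2 hx.2.le) (right_mem_Icc.2 hx.2.le) hx.2.le
      -- h m e^{-Dm} ≤ h x e^{-Dx} ≤ h x
      have hex3 : Real.exp (-D*x) ≤ 1 := by
        rw [show (1:ℝ) = Real.exp 0 by simp]
        exact Real.exp_le_exp.2 (by nlinarith [hxI.1])
      have hex4 : Real.exp (-D) ≤ Real.exp (-D*m) := Real.exp_le_exp.2 (by nlinarith [hmI.2])
      have hhm := (hapos m hmI).le
      have hhx := (hapos x ⟨hx.1, hxI.2⟩).le
      dsimp only at hanti2
      have t1 : h x * Real.exp (-D*x) ≤ h x * 1 := mul_le_mul_of_nonneg_left hex3 hhx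
      rw [mul_one] at t1
      have t2 : h m * Real.exp (-D) ≤ h m * Real.exp (-D*m) := mul_le_mul_of_nonneg_left hex4 hhm
      linarith
    have hfinal : h m * Real.exp (-D) ≤ h a :=
      left_lim_ge hmI.1 (hcont a ⟨ha0lt.le, haI.2.le⟩)
        (fun t ht => ⟨(lt_trans ha0lt ht.1).le, (lt_trans ht.2 hmI.2).le⟩) hlow
    rw [ha0] at hfinal
    linarith
  refine ⟨hpos, ?_⟩
  intro p hp
  rcases (Hfun_nonneg hmap hmono hd hp).lt_or_eq with hlt | heq
  · exact hlt
  · exact absurd (no_H_zero hmap hmono hcont hd hdd hk ⟨le_refl (0:ℝ), zero_lt_one⟩ h0 hpos hp heq.symm) id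

end Positivity


/- ## psi coordinates -/

noncomputable def psi (h : ℝ → ℝ) (u : ℝ) : ℝ := - Real.log (h (Real.exp (-u)))
noncomputable def psi' (h h' : ℝ → ℝ) (s : ℝ) : ℝ := Hfun h h' (Real.exp (-s))

lemma expnegmem {u : ℝ} (hu : 0 ≤ u) : Real.exp (-u) ∈ Set.Ioc (0:ℝ) 1 :=
  ⟨Real.exp_pos _, by rw [show (1:ℝ) = Real.exp 0 by simp]; exact Real.exp_le_exp.2 (by linarith)⟩

lemma expnegmem' {u : ℝ} (hu : 0 < u) : Real.exp (-u) ∈ Set.Ioo (0:ℝ) 1 :=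
  ⟨Real.exp_pos _, by rw [show (1:ℝ) = Real.exp 0 by simp]; exact Real.exp_lt_exp.2 (by linarith)⟩

lemma hasDerivAt_expneg (u : ℝ) : HasDerivAt (fun y : ℝ => Real.exp (-y)) (-Real.exp (-u)) u := by
  have h1 : HasDerivAt (fun y : ℝ => -y) (-1 : ℝ) u := by exact (hasDerivAt_id' u).neg
  exact ((Real.hasDerivAt_exp (-u)).comp u h1).congr_deriv (by ring)

section Psi
variable {h h' h'' : ℝ → ℝ}

lemma hasDerivAt_psi
    (hd : ∀ p ∈ Set.Icc (0:ℝ) 1, HasDerivAt h (h' p) p)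
    {u : ℝ} (hu : 0 ≤ u) (hne : h (Real.exp (-u)) ≠ 0) :
    HasDerivAt (psi h) (psi' h h' u) u := by
  have hp := expnegmem hu
  have hIcc : Real.exp (-u) ∈ Set.Icc (0:ℝ) 1 := ⟨hp.1.le, hp.2⟩
  have h2 : HasDerivAt (fun y : ℝ => h (Real.exp (-y)))
      (h' (Real.exp (-u)) * (-Real.exp (-u))) u :=
    (hd _ hIcc).comp u (hasDerivAt_expneg u)
  have h3 : HasDerivAt (fun y : ℝ => Real.log (h (Real.exp (-y))))
      ((h (Real.exp (-u)))⁻¹ * (h' (Real.exp (-u)) * (-Real.exp (-u)))) u :=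
    (h2.log hne).congr_deriv (by field_simp)
  have h4 := h3.neg
  have : -((h (Real.exp (-u)))⁻¹ * (h' (Real.exp (-u)) * (-Real.exp (-u))))
      = psi' h h' u := by
    unfold psi' Hfun
    field_simp
  rw [this] at h4
  exact h4

lemma hasDerivAt_psi'
    (hd : ∀ p ∈ Set.Icc (0:ℝ) 1, HasDerivAt h (h' p) p)
    (hdd : ∀ p ∈ Set.Icc (0:ℝ) 1, HasDerivAt h' (h'' p) p)
    {u : ℝ} (hu : 0 ≤ u) (hne : h (Real.exp (-u)) ≠ 0) :
    HasDerivAt (psi' h h')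
      (-Real.exp (-u) * deriv (Hfun h h') (Real.exp (-u))) u := by
  have hp := expnegmem hu
  have hIcc : Real.exp (-u) ∈ Set.Icc (0:ℝ) 1 := ⟨hp.1.le, hp.2⟩
  have h2 := (hasDerivAt_Hfun hd hdd hIcc hne).comp u (hasDerivAt_expneg u)
  exact h2.congr_deriv (by ring)

lemma continuousAt_psi'
    (hd : ∀ p ∈ Set.Icc (0:ℝ) 1, HasDerivAt h (h' p) p)
    (hdd : ∀ p ∈ Set.Icc (0:ℝ) 1, HasDerivAt h' (h'' p) p)
    {u : ℝ} (hu : 0 ≤ u) (hne : h (Real.exp (-u)) ≠ 0) :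
    ContinuousAt (psi' h h') u := by
  have hp := expnegmem hu
  have hIcc : Real.exp (-u) ∈ Set.Icc (0:ℝ) 1 := ⟨hp.1.le, hp.2⟩
  have hcexp : ContinuousAt (fun y : ℝ => Real.exp (-y)) u :=
    (Real.continuous_exp.comp continuous_neg).continuousAt
  unfold psi'
  exact ContinuousAt.comp (x := u) (g := Hfun h h') (f := fun y : ℝ => Real.exp (-y))
    (continuousAt_Hfun hd hdd hIcc hne) hcexp

/-- FTC for psi -/
lemma psi_ftc
    (hd : ∀ p ∈ Set.Icc (0:ℝ) 1, HasDerivAt h (h' p) p)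
    (hdd : ∀ p ∈ Set.Icc (0:ℝ) 1, HasDerivAt h' (h'' p) p)
    {u₀ u : ℝ} (h0 : 0 ≤ u₀) (hu : u₀ ≤ u)
    (hne : ∀ s ∈ Set.Icc u₀ u, h (Real.exp (-s)) ≠ 0) :
    ∫ s in u₀..u, psi' h h' s = psi h u - psi h u₀ := by
  apply intervalIntegral.integral_eq_sub_of_hasDerivAt
  · intro s hs
    rw [Set.uIcc_of_le hu] at hs
    exact hasDerivAt_psi hd (h0.trans hs.1) (hne s hs)
  · apply ContinuousOn.intervalIntegrable
    rw [Set.uIcc_of_le hu]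
    intro s hs
    exact (continuousAt_psi' hd hdd (h0.trans hs.1) (hne s hs)).continuousWithinAt

/-- FTC for scaled psi -/
lemma psi_ftc_scaled {a : ℝ} (ha : 1 ≤ a)
    (hd : ∀ p ∈ Set.Icc (0:ℝ) 1, HasDerivAt h (h' p) p)
    (hdd : ∀ p ∈ Set.Icc (0:ℝ) 1, HasDerivAt h' (h'' p) p)
    {u : ℝ} (hu : 0 ≤ u)
    (hne : ∀ s ∈ Set.Icc (0:ℝ) (a*u), h (Real.exp (-s)) ≠ 0) :
    ∫ s in (0:ℝ)..u, psi' h h' (a*s) * a = psi h (a*u) - psi h 0 := by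
  have ha0 : 0 ≤ a := by linarith
  have key : ∀ s ∈ Set.uIcc (0:ℝ) u, HasDerivAt (fun y => psi h (a*y)) (psi' h h' (a*s) * a) s := by
    intro s hs
    rw [Set.uIcc_of_le hu] at hs
    have hlin : HasDerivAt (fun y : ℝ => a * y) a s := by simpa using (hasDerivAt_id s).const_mul a
    have hasu : 0 ≤ a * s := mul_nonneg ha0 hs.1
    have : a * s ∈ Set.Icc (0:ℝ) (a*u) := ⟨hasu, by nlinarith [hs.2]⟩
    exact (hasDerivAt_psi hd hasu (hne _ this)).comp s hlin
  have hint : IntervalIntegrable (fun s => psi' h h' (a*s) * a) volume 0 u := by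
    apply ContinuousOn.intervalIntegrable
    rw [Set.uIcc_of_le hu]
    intro s hs
    have hasu : 0 ≤ a * s := mul_nonneg ha0 hs.1
    have hmem : a * s ∈ Set.Icc (0:ℝ) (a*u) := ⟨hasu, by nlinarith [hs.2]⟩
    exact (((continuousAt_psi' hd hdd hasu (hne _ hmem)).comp
      ((continuous_const.mul continuous_id).continuousAt)).mul continuousAt_const).continuousWithinAt
  have := intervalIntegral.integral_eq_sub_of_hasDerivAt key hint
  simpa using this

lemma psi_zero (h1 : h 1 = 1) : psi h 0 = 0 := by
  unfold psi; simp [h1]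

lemma psi_nonneg (hmap : Set.MapsTo h (Set.Icc 0 1) (Set.Icc 0 1))
    {u : ℝ} (hu : 0 ≤ u) : 0 ≤ psi h u := by
  unfold psi
  have hp := expnegmem hu
  have := Real.log_nonpos (h_nonneg hmap ⟨hp.1.le, hp.2⟩) (h_le_one hmap ⟨hp.1.le, hp.2⟩)
  linarith

lemma h'_pos_of_Hpos (hpos : ∀ p ∈ Set.Ioo (0:ℝ) 1, 0 < h p)
    (hHpos : ∀ p ∈ Set.Ioo (0:ℝ) 1, 0 < Hfun h h' p)
    {p : ℝ} (hp : p ∈ Set.Ioo (0:ℝ) 1) : 0 < h' p := by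
  have h1 := hHpos p hp
  unfold Hfun at h1
  have h2 := hpos p hp
  rcases div_pos_iff.1 h1 with ⟨hx, _⟩ | ⟨_, hy⟩
  · nlinarith [hp.1]
  · linarith

lemma h_lt_one (hcont : ContinuousOn h (Set.Icc 0 1)) (h1 : h 1 = 1)
    (hd : ∀ p ∈ Set.Icc (0:ℝ) 1, HasDerivAt h (h' p) p)
    (hpos : ∀ p ∈ Set.Ioo (0:ℝ) 1, 0 < h p)
    (hHpos : ∀ p ∈ Set.Ioo (0:ℝ) 1, 0 < Hfun h h' p)
    {p : ℝ} (hp : p ∈ Set.Ioo (0:ℝ) 1) : h p < 1 := by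
  have hsub : Set.Icc p 1 ⊆ Set.Icc (0:ℝ) 1 := fun t ht => ⟨hp.1.le.trans ht.1, ht.2⟩
  have hmono : StrictMonoOn h (Set.Icc p 1) := by
    apply strictMonoOn_of_deriv_pos (convex_Icc p 1) (hcont.mono hsub)
    rw [interior_Icc]
    intro t ht
    have htI : t ∈ Set.Ioo (0:ℝ) 1 := ⟨lt_of_lt_of_le hp.1 ht.1.le, ht.2⟩
    rw [(hd t (hsub (Ioo_subset_Icc_self ht))).deriv]
    exact h'_pos_of_Hpos hpos hHpos htI
  have := hmono (left_mem_Icc.2 hp.2.le) (right_mem_Icc.2 hp.2.le) hp.2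
  rwa [h1] at this

lemma psi_pos (hcont : ContinuousOn h (Set.Icc 0 1)) (h1 : h 1 = 1)
    (hd : ∀ p ∈ Set.Icc (0:ℝ) 1, HasDerivAt h (h' p) p)
    (hpos : ∀ p ∈ Set.Ioo (0:ℝ) 1, 0 < h p)
    (hHpos : ∀ p ∈ Set.Ioo (0:ℝ) 1, 0 < Hfun h h' p)
    {u : ℝ} (hu : 0 < u) : 0 < psi h u := by
  unfold psi
  have hp := expnegmem' hu
  have := Real.log_neg (hpos _ hp) (h_lt_one hcont h1 hd hpos hHpos hp)
  linarith

end Psi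


/- ## C and D lemmas for the "clean" distortion function -/

section CleanPsi
variable {h h' h'' : ℝ → ℝ}

lemma hne_of_pos (h1 : h 1 = 1) (hpos : ∀ p ∈ Set.Ioo (0:ℝ) 1, 0 < h p) :
    ∀ s : ℝ, 0 ≤ s → h (Real.exp (-s)) ≠ 0 := by
  intro s hs
  rcases eq_or_lt_of_le hs with he | hlt
  · rw [← he]; simp [h1]
  · exact ne_of_gt (hpos _ (expnegmem' hlt))

lemma ratioC
    (hd : ∀ p ∈ Set.Icc (0:ℝ) 1, HasDerivAt h (h' p) p)
    (hdd : ∀ p ∈ Set.Icc (0:ℝ) 1, HasDerivAt h' (h'' p) p)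
    (hpos : ∀ p ∈ Set.Ioo (0:ℝ) 1, 0 < h p)
    (hHpos : ∀ p ∈ Set.Ioo (0:ℝ) 1, 0 < Hfun h h' p)
    (hk : kCond h h') {a : ℝ} (ha : 1 ≤ a) :
    AntitoneOn (fun s => psi' h h' (a*s) / psi' h h' s) (Set.Ioi 0) := by
  have key : ∀ s ∈ Set.Ioi (0:ℝ), HasDerivAt (fun s => psi' h h' (a*s) / psi' h h' s)
      (((-Real.exp (-(a*s)) * deriv (Hfun h h') (Real.exp (-(a*s))) * a) * psi' h h' s -
        psi' h h' (a*s) * (-Real.exp (-s) * deriv (Hfun h h') (Real.exp (-s)))) /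
        (psi' h h' s)^2) s := by
    intro s hs
    rw [Set.mem_Ioi] at hs
    have hpI := expnegmem' hs
    have hasp : 0 < a*s := by nlinarith
    have hqI := expnegmem' hasp
    have hlin : HasDerivAt (fun y : ℝ => a * y) a s := by simpa using (hasDerivAt_id s).const_mul a
    have Hq : HasDerivAt (fun s => psi' h h' (a*s))
        (-Real.exp (-(a*s)) * deriv (Hfun h h') (Real.exp (-(a*s))) * a) s :=
      (hasDerivAt_psi' hd hdd hasp.le (ne_of_gt (hpos _ hqI))).comp s hlin
    have Hp : HasDerivAt (psi' h h')
        (-Real.exp (-s) * deriv (Hfun h h') (Real.exp (-s))) s :=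
      hasDerivAt_psi' hd hdd hs.le (ne_of_gt (hpos _ hpI))
    exact Hq.div Hp (ne_of_gt (hHpos _ hpI))
  apply antitoneOn_of_deriv_nonpos (convex_Ioi 0)
  · exact fun s hs => (key s hs).continuousAt.continuousWithinAt
  · rw [interior_Ioi]
    exact fun s hs => (key s hs).differentiableAt.differentiableWithinAt
  · rw [interior_Ioi]
    intro s hs
    rw [(key s hs).deriv]
    rw [Set.mem_Ioi] at hs
    have hasp : 0 < a*s := by nlinarith
    simp only [psi']
    set p := Real.exp (-s) with hpdef
    set q := Real.exp (-(a*s)) with hqdef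
    have hpI : p ∈ Set.Ioo (0:ℝ) 1 := expnegmem' hs
    have hqI : q ∈ Set.Ioo (0:ℝ) 1 := expnegmem' hasp
    have hKp := hHpos p hpI
    have hKq := hHpos q hqI
    have h1p : (0:ℝ) < 1 - p := by linarith [hpI.2]
    have h1q : (0:ℝ) < 1 - q := by linarith [hqI.2]
    have hDp : (1-p) * deriv (Hfun h h') p = expr h h' p * Hfun h h' p := by
      unfold expr; field_simp
    have hDq : (1-q) * deriv (Hfun h h') q = expr h h' q * Hfun h h' q := by
      unfold expr; field_simp
    have hqlep : q ≤ p := Real.exp_le_exp.2 (by nlinarith)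
    have heanti : expr h h' p ≤ expr h h' q := hk.2 hqI hpI hqlep
    have hep : expr h h' p ≤ 0 := hk.1 p hpI
    have heq : expr h h' q ≤ 0 := hk.1 q hqI
    have hfrac : a * q * (1 - p) ≤ p * (1 - q) := by
      have hS : (0:ℝ) < Real.exp s := Real.exp_pos s
      have hQ : (0:ℝ) < Real.exp (a*s) := Real.exp_pos _
      have haux := exp_aux ha hs.le
      have hq' : q = (Real.exp (a*s))⁻¹ := by rw [hqdef, ← Real.exp_neg]
      have hp' : p = (Real.exp s)⁻¹ := by rw [hpdef, ← Real.exp_neg]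
      rw [hq', hp']
      have expand : (Real.exp s)⁻¹ * (1 - (Real.exp (a*s))⁻¹)
          - a * (Real.exp (a*s))⁻¹ * (1 - (Real.exp s)⁻¹)
          = ((Real.exp (a*s) - 1) - a*(Real.exp s - 1)) / (Real.exp (a*s) * Real.exp s) := by
        field_simp
      have hnn : 0 ≤ ((Real.exp (a*s) - 1) - a*(Real.exp s - 1)) / (Real.exp (a*s) * Real.exp s) :=
        div_nonneg (by linarith) (mul_pos hQ hS).le
      rw [← expand] at hnn
      linarith
    have main : a * q * (-(expr h h' q)) * (1 - p) ≤ p * (-(expr h h' p)) * (1 - q) := by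
      have m2 : a * q * (1 - p) * (-(expr h h' q)) ≤ p * (1 - q) * (-(expr h h' q)) :=
        mul_le_mul_of_nonneg_right hfrac (by linarith)
      have m3 : p * (1 - q) * (-(expr h h' q)) ≤ p * (1 - q) * (-(expr h h' p)) :=
        mul_le_mul_of_nonneg_left (by linarith) (by nlinarith [hpI.1])
      nlinarith [m2, m3]
    apply div_nonpos_iff.2
    refine Or.inr ⟨?_, sq_nonneg _⟩
    have hNm : ((-q * deriv (Hfun h h') q * a) * Hfun h h' p
          - Hfun h h' q * (-p * deriv (Hfun h h') p)) * ((1-p)*(1-q))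
        = (a*q*(-(expr h h' q))*(1-p) - p*(-(expr h h' p))*(1-q))
          * (Hfun h h' p * Hfun h h' q) := by
      linear_combination (-(a*q*Hfun h h' p*(1-p))) * hDq + (p * Hfun h h' q * (1-q)) * hDp
    have hdiff : a*q*(-(expr h h' q))*(1-p) - p*(-(expr h h' p))*(1-q) ≤ 0 := by linarith
    have h2 : ((-q * deriv (Hfun h h') q * a) * Hfun h h' p
        - Hfun h h' q * (-p * deriv (Hfun h h') p)) * ((1-p)*(1-q)) ≤ 0 := by
      rw [hNm]
      exact mul_nonpos_iff.2 (Or.inr ⟨hdiff, (mul_pos hKp hKq).le⟩)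
    nlinarith [h2, mul_pos h1p h1q]

end CleanPsi

section DLemma
variable {h h' h'' : ℝ → ℝ}

lemma ratioD
    (hcont : ContinuousOn h (Set.Icc 0 1)) (h1 : h 1 = 1)
    (hd : ∀ p ∈ Set.Icc (0:ℝ) 1, HasDerivAt h (h' p) p)
    (hdd : ∀ p ∈ Set.Icc (0:ℝ) 1, HasDerivAt h' (h'' p) p)
    (hpos : ∀ p ∈ Set.Ioo (0:ℝ) 1, 0 < h p)
    (hHpos : ∀ p ∈ Set.Ioo (0:ℝ) 1, 0 < Hfun h h' p)
    (hk : kCond h h') {a : ℝ} (ha : 1 ≤ a) :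
    MonotoneOn (fun u => psi h u / psi h (a*u)) (Set.Ioi 0) := by
  have hne := hne_of_pos (h := h) h1 hpos
  have psipos : ∀ u : ℝ, 0 < u → 0 < psi h u := fun u hu => psi_pos hcont h1 hd hpos hHpos hu
  have key : ∀ u ∈ Set.Ioi (0:ℝ), HasDerivAt (fun u => psi h u / psi h (a*u))
      ((psi' h h' u * psi h (a*u) - psi h u * (psi' h h' (a*u) * a)) / (psi h (a*u))^2) u := by
    intro u hu
    rw [Set.mem_Ioi] at hu
    have hau : 0 < a*u := by nlinarith
    have hlin : HasDerivAt (fun y : ℝ => a * y) a u := by simpa using (hasDerivAt_id u).const_mul a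
    have H1 : HasDerivAt (psi h) (psi' h h' u) u := hasDerivAt_psi hd hu.le (hne u hu.le)
    have H2 : HasDerivAt (fun y => psi h (a*y)) (psi' h h' (a*u) * a) u :=
      (hasDerivAt_psi hd hau.le (hne _ hau.le)).comp u hlin
    exact H1.div H2 (ne_of_gt (psipos _ hau))
  apply monotoneOn_of_deriv_nonneg (convex_Ioi 0)
  · exact fun u hu => (key u hu).continuousAt.continuousWithinAt
  · rw [interior_Ioi]; exact fun u hu => (key u hu).differentiableAt.differentiableWithinAt
  · rw [interior_Ioi]
    intro u hu
    rw [(key u hu).deriv]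
    rw [Set.mem_Ioi] at hu
    have hau : 0 < a*u := by nlinarith
    apply div_nonneg _ (sq_nonneg _)
    have hnem : ∀ s ∈ Set.Icc (0:ℝ) u, h (Real.exp (-s)) ≠ 0 := fun s hsm => hne s hsm.1
    have hnem2 : ∀ s ∈ Set.Icc (0:ℝ) (a*u), h (Real.exp (-s)) ≠ 0 := fun s hsm => hne s hsm.1
    have ftc1 : ∫ s in (0:ℝ)..u, psi' h h' s = psi h u := by
      rw [psi_ftc hd hdd (le_refl (0:ℝ)) hu.le hnem, psi_zero h1, sub_zero]
    have ftc2 : ∫ s in (0:ℝ)..u, psi' h h' (a*s) * a = psi h (a*u) := by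
      rw [psi_ftc_scaled ha hd hdd hu.le hnem2, psi_zero h1, sub_zero]
    have hint1 : IntervalIntegrable (psi' h h') volume 0 u := by
      apply ContinuousOn.intervalIntegrable
      rw [Set.uIcc_of_le hu.le]
      exact fun s hsm => (continuousAt_psi' hd hdd hsm.1 (hne s hsm.1)).continuousWithinAt
    have hint2 : IntervalIntegrable (fun s => psi' h h' (a*s) * a) volume 0 u := by
      apply ContinuousOn.intervalIntegrable
      rw [Set.uIcc_of_le hu.le]
      intro s hsm
      have h0as : 0 ≤ a*s := by nlinarith [hsm.1]
      have hcomp : ContinuousAt (fun s : ℝ => psi' h h' (a*s)) s :=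
        ContinuousAt.comp (x := s) (g := psi' h h') (f := fun y : ℝ => a*y)
          (continuousAt_psi' hd hdd h0as (hne _ h0as))
          ((continuous_const.mul continuous_id).continuousAt)
      exact (hcomp.mul continuousAt_const).continuousWithinAt
    rw [← ftc1, ← ftc2]
    rw [← intervalIntegral.integral_const_mul, ← intervalIntegral.integral_mul_const]
    rw [← intervalIntegral.integral_sub (hint2.const_mul _) (hint1.mul_const _)]
    apply integral_nonneg_Ioo hu.le
    intro s hsm
    have hs0 : 0 < s := hsm.1
    have has0 : 0 < a*s := by nlinarith
    have hru := ratioC hd hdd hpos hHpos hk ha (Set.mem_Ioi.2 hs0) (Set.mem_Ioi.2 hu) hsm.2.le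
    dsimp only at hru
    have hps : 0 < psi' h h' s := hHpos _ (expnegmem' hs0)
    have hpu : 0 < psi' h h' u := hHpos _ (expnegmem' hu)
    rw [div_le_div_iff₀ hpu hps] at hru
    nlinarith [hru]

end DLemma

section BLemma

lemma ratioB {h₁ h₁' h₁'' h₂ h₂' h₂'' : ℝ → ℝ}
    (hmap₁ : Set.MapsTo h₁ (Set.Icc 0 1) (Set.Icc 0 1))
    (hmono₁ : MonotoneOn h₁ (Set.Icc 0 1))
    (h₁1 : h₁ 1 = 1)
    (hd₁ : ∀ p ∈ Set.Icc (0:ℝ) 1, HasDerivAt h₁ (h₁' p) p)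
    (hdd₁ : ∀ p ∈ Set.Icc (0:ℝ) 1, HasDerivAt h₁' (h₁'' p) p)
    (h1pos : ∀ p ∈ Set.Ioo (0:ℝ) 1, 0 < h₁ p)
    (hmap₂ : Set.MapsTo h₂ (Set.Icc 0 1) (Set.Icc 0 1))
    (hcont₂ : ContinuousOn h₂ (Set.Icc 0 1))
    (h₂1 : h₂ 1 = 1)
    (hd₂ : ∀ p ∈ Set.Icc (0:ℝ) 1, HasDerivAt h₂ (h₂' p) p)
    (hdd₂ : ∀ p ∈ Set.Icc (0:ℝ) 1, HasDerivAt h₂' (h₂'' p) p)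
    (h2pos : ∀ p ∈ Set.Ioo (0:ℝ) 1, 0 < h₂ p)
    (hH2pos : ∀ p ∈ Set.Ioo (0:ℝ) 1, 0 < Hfun h₂ h₂' p)
    (hρ : MonotoneOn (fun s => Hfun h₁ h₁' (Real.exp (-s)) / Hfun h₂ h₂' (Real.exp (-s)))
      (Set.Ioi 0))
    {u₀ : ℝ} (hu₀ : 0 ≤ u₀) (hψ₁u₀ : psi h₁ u₀ = 0) :
    MonotoneOn (fun u => psi h₁ u / psi h₂ u) (Set.Ioi u₀) := by
  have hne₁ := hne_of_pos (h := h₁) h₁1 h1pos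
  have hne₂ := hne_of_pos (h := h₂) h₂1 h2pos
  have key : ∀ u ∈ Set.Ioi u₀, HasDerivAt (fun u => psi h₁ u / psi h₂ u)
      ((psi' h₁ h₁' u * psi h₂ u - psi h₁ u * psi' h₂ h₂' u) / (psi h₂ u)^2) u := by
    intro u hu
    rw [Set.mem_Ioi] at hu
    have hu0 : 0 < u := lt_of_le_of_lt hu₀ hu
    have H1 : HasDerivAt (psi h₁) (psi' h₁ h₁' u) u := hasDerivAt_psi hd₁ hu0.le (hne₁ u hu0.le)
    have H2 : HasDerivAt (psi h₂) (psi' h₂ h₂' u) u := hasDerivAt_psi hd₂ hu0.le (hne₂ u hu0.le)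
    exact H1.div H2 (ne_of_gt (psi_pos hcont₂ h₂1 hd₂ h2pos hH2pos hu0))
  apply monotoneOn_of_deriv_nonneg (convex_Ioi u₀)
  · exact fun u hu => (key u hu).continuousAt.continuousWithinAt
  · rw [interior_Ioi]; exact fun u hu => (key u hu).differentiableAt.differentiableWithinAt
  · rw [interior_Ioi]
    intro u hu
    rw [(key u hu).deriv]
    rw [Set.mem_Ioi] at hu
    have hu0 : 0 < u := lt_of_le_of_lt hu₀ hu
    apply div_nonneg _ (sq_nonneg _)
    have hp2u : 0 < psi' h₂ h₂' u := hH2pos _ (expnegmem' hu0)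
    set ρu := psi' h₁ h₁' u / psi' h₂ h₂' u with hρudef
    have hρnn : 0 ≤ ρu := div_nonneg
      (Hfun_nonneg hmap₁ hmono₁ hd₁ (expnegmem' hu0)) hp2u.le
    have hnemA : ∀ s ∈ Set.Icc u₀ u, h₁ (Real.exp (-s)) ≠ 0 :=
      fun s hsm => hne₁ s (hu₀.trans hsm.1)
    have hnemB : ∀ s ∈ Set.Icc u₀ u, h₂ (Real.exp (-s)) ≠ 0 :=
      fun s hsm => hne₂ s (hu₀.trans hsm.1)
    have ftcA : ∫ s in u₀..u, psi' h₁ h₁' s = psi h₁ u := by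
      rw [psi_ftc hd₁ hdd₁ hu₀ hu.le hnemA, hψ₁u₀, sub_zero]
    have ftcB : ∫ s in u₀..u, psi' h₂ h₂' s = psi h₂ u - psi h₂ u₀ :=
      psi_ftc hd₂ hdd₂ hu₀ hu.le hnemB
    have hint1 : IntervalIntegrable (psi' h₁ h₁') volume u₀ u := by
      apply ContinuousOn.intervalIntegrable
      rw [Set.uIcc_of_le hu.le]
      exact fun s hsm => (continuousAt_psi' hd₁ hdd₁ (hu₀.trans hsm.1) (hnemA s hsm)).continuousWithinAt
    have hint2 : IntervalIntegrable (psi' h₂ h₂') volume u₀ u := by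
      apply ContinuousOn.intervalIntegrable
      rw [Set.uIcc_of_le hu.le]
      exact fun s hsm => (continuousAt_psi' hd₂ hdd₂ (hu₀.trans hsm.1) (hnemB s hsm)).continuousWithinAt
    have cmp : psi h₁ u ≤ ρu * (psi h₂ u - psi h₂ u₀) := by
      rw [← ftcA, ← ftcB, ← intervalIntegral.integral_const_mul]
      have h0 : 0 ≤ ∫ s in u₀..u, (ρu * psi' h₂ h₂' s - psi' h₁ h₁' s) := by
        apply integral_nonneg_Ioo hu.le
        intro s hsm
        have hs0 : 0 < s := lt_of_le_of_lt hu₀ hsm.1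
        have hp2s : 0 < psi' h₂ h₂' s := hH2pos _ (expnegmem' hs0)
        have hmono := hρ (Set.mem_Ioi.2 hs0) (Set.mem_Ioi.2 hu0) hsm.2.le
        dsimp only at hmono
        have heq : psi' h₁ h₁' s = (psi' h₁ h₁' s / psi' h₂ h₂' s) * psi' h₂ h₂' s :=
          (div_mul_cancel₀ _ (ne_of_gt hp2s)).symm
        have hineq : (psi' h₁ h₁' s / psi' h₂ h₂' s) * psi' h₂ h₂' s ≤ ρu * psi' h₂ h₂' s :=
          mul_le_mul_of_nonneg_right hmono hp2s.le
        rw [heq]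
        linarith
      have hsplit := intervalIntegral.integral_sub (hint2.const_mul ρu) hint1
      rw [hsplit] at h0
      linarith
    have hψ₂u₀ : 0 ≤ psi h₂ u₀ := psi_nonneg hmap₂ hu₀
    have hcanc : ρu * psi' h₂ h₂' u = psi' h₁ h₁' u := div_mul_cancel₀ _ (ne_of_gt hp2u)
    have hchain : psi h₁ u ≤ ρu * psi h₂ u := by nlinarith
    have hm := mul_le_mul_of_nonneg_right hchain hp2u.le
    have h3 : ρu * psi h₂ u * psi' h₂ h₂' u = psi' h₁ h₁' u * psi h₂ u := by
      rw [← hcanc]; ring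
    linarith [hm, h3]

end BLemma

section Transfer
variable {h₁ h₁' h₁'' h₂ h₂' h₂'' : ℝ → ℝ}

/-- In case (ii): positivity of `Hfun h₂` transfers from condition (i). -/
lemma H2_pos_of_cond_i
    (hmap₂ : Set.MapsTo h₂ (Set.Icc 0 1) (Set.Icc 0 1))
    (hmono₂ : MonotoneOn h₂ (Set.Icc 0 1))
    (hcont₂ : ContinuousOn h₂ (Set.Icc 0 1))
    (h₂0 : h₂ 0 = 0) (h₂1 : h₂ 1 = 1)
    (hd₂ : ∀ p ∈ Set.Icc (0:ℝ) 1, HasDerivAt h₂ (h₂' p) p)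
    (hdd₂ : ∀ p ∈ Set.Icc (0:ℝ) 1, HasDerivAt h₂' (h₂'' p) p)
    (hd₁ : ∀ p ∈ Set.Icc (0:ℝ) 1, HasDerivAt h₁ (h₁' p) p)
    (hdd₁ : ∀ p ∈ Set.Icc (0:ℝ) 1, HasDerivAt h₁' (h₁'' p) p)
    (h1pos : ∀ p ∈ Set.Ioo (0:ℝ) 1, 0 < h₁ p)
    (hH1pos : ∀ p ∈ Set.Ioo (0:ℝ) 1, 0 < Hfun h₁ h₁' p)
    (cond_i : AntitoneOn (fun p => Hfun h₁ h₁' p / Hfun h₂ h₂' p) (Set.Ioo 0 1)) :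
    (∀ p ∈ Set.Ioo (0:ℝ) 1, 0 < h₂ p) ∧ (∀ p ∈ Set.Ioo (0:ℝ) 1, 0 < Hfun h₂ h₂' p) := by
  have hH2nn : ∀ p ∈ Set.Ioo (0:ℝ) 1, 0 ≤ Hfun h₂ h₂' p :=
    fun p hp => Hfun_nonneg hmap₂ hmono₂ hd₂ hp
  have upcl : ∀ p ∈ Set.Ioo (0:ℝ) 1, Hfun h₂ h₂' p = 0 →
      ∀ p' ∈ Set.Ioo (0:ℝ) 1, p ≤ p' → Hfun h₂ h₂' p' = 0 := by
    intro p hp hp0 p' hp' hpp'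
    have hr : Hfun h₁ h₁' p / Hfun h₂ h₂' p = 0 := by rw [hp0, div_zero]
    have hle := cond_i hp hp' hpp'
    dsimp only at hle
    rw [hr] at hle
    by_contra hne
    have hpos' : 0 < Hfun h₂ h₂' p' := lt_of_le_of_ne (hH2nn p' hp') (Ne.symm hne)
    have : 0 < Hfun h₁ h₁' p' / Hfun h₂ h₂' p' := div_pos (hH1pos p' hp') hpos'
    linarith
  by_cases hQ : ∃ z ∈ Set.Ioo (0:ℝ) 1, Hfun h₂ h₂' z = 0
  · exfalso
    obtain ⟨z, hz, hz0⟩ := hQ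
    set Q := {p : ℝ | p ∈ Set.Ioo (0:ℝ) 1 ∧ Hfun h₂ h₂' p = 0} with hQdef
    have hzQ : z ∈ Q := ⟨hz, hz0⟩
    have hbdd : BddBelow Q := ⟨0, fun t ht => ht.1.1.le⟩
    set b := sInf Q with hbdef
    have hb0 : 0 ≤ b := le_csInf ⟨z, hzQ⟩ (fun t ht => ht.1.1.le)
    have hbz : b ≤ z := csInf_le hbdd hzQ
    have hb1 : b < 1 := lt_of_le_of_lt hbz hz.2
    have hQsup : ∀ p ∈ Set.Ioo (0:ℝ) 1, b < p → Hfun h₂ h₂' p = 0 := by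
      intro p hp hbp
      obtain ⟨t, htQ, htp⟩ := exists_lt_of_csInf_lt ⟨z, hzQ⟩ hbp
      exact upcl t htQ.1 htQ.2 p hp htp.le
    rcases eq_or_lt_of_le hb0 with hb00 | hb0'
    · -- b = 0 : Hfun₂ vanishes identically
      apply flat_contra hmap₂ hmono₂ hcont₂ h₂1 hd₂
        (show (0:ℝ) ∈ Set.Ico (0:ℝ) 1 from ⟨le_refl 0, zero_lt_one⟩) h₂0
      intro p hp
      exact hQsup p hp (by rw [← hb00]; exact hp.1)
    · -- b > 0
      have hbI : b ∈ Set.Ioo (0:ℝ) 1 := ⟨hb0', hb1⟩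
      have hQbelow : ∀ p ∈ Set.Ioo (0:ℝ) b, 0 < Hfun h₂ h₂' p := by
        intro p hp
        have hpI : p ∈ Set.Ioo (0:ℝ) 1 := ⟨hp.1, hp.2.trans hb1⟩
        rcases (hH2nn p hpI).lt_or_eq with hlt | heq
        · exact hlt
        · exact absurd (csInf_le hbdd ⟨hpI, heq.symm⟩) (not_le.2 hp.2)
      have h2posb : ∀ p ∈ Set.Ioo (0:ℝ) b, 0 < h₂ p := by
        intro p hp
        by_contra hc
        push_neg at hc
        have hpI : p ∈ Set.Ioo (0:ℝ) 1 := ⟨hp.1, hp.2.trans hb1⟩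
        have h20 : h₂ p = 0 := le_antisymm hc (h_nonneg hmap₂ (Ioo_subset_Icc_self hpI))
        have : Hfun h₂ h₂' p = 0 := by unfold Hfun; rw [h20, div_zero]
        exact absurd this (ne_of_gt (hQbelow p hp))
      have hw : b/2 ∈ Set.Ioo (0:ℝ) b := ⟨by linarith, by linarith⟩
      have hwI : b/2 ∈ Set.Ioo (0:ℝ) 1 := ⟨hw.1, hw.2.trans hb1⟩
      have h2b : 0 < h₂ b := by
        have := hmono₂ (Ioo_subset_Icc_self hwI) ⟨hb0, hb1.le⟩ hw.2.le
        linarith [h2posb _ hw]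
      have hH2b : Hfun h₂ h₂' b = 0 := by
        apply left_lim_const (f := Hfun h₂ h₂') (s := Set.univ) hb1
        · exact (continuousAt_Hfun hd₂ hdd₂ ⟨hb0, hb1.le⟩ (ne_of_gt h2b)).continuousWithinAt
        · exact fun t _ => trivial
        · intro x hx
          exact hQsup x ⟨lt_trans hb0' hx.1, hx.2⟩ hx.1
      -- contradiction via limit from the left
      set w := b/2 with hwdef
      set r := Hfun h₁ h₁' w / Hfun h₂ h₂' w with hrdef
      have hrnn : 0 ≤ r := div_nonneg (hH1pos w hwI).le (hH2nn w hwI)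
      have hbnd : ∀ p ∈ Set.Ioo w b, Hfun h₁ h₁' p - r * Hfun h₂ h₂' p ≤ 0 := by
        intro p hp
        have hpI : p ∈ Set.Ioo (0:ℝ) 1 := ⟨lt_trans hw.1 hp.1, hp.2.trans hb1⟩
        have hle := cond_i hwI hpI hp.1.le
        dsimp only at hle
        rw [← hrdef] at hle
        have hp2 : 0 < Hfun h₂ h₂' p := hQbelow p ⟨hpI.1, hp.2⟩
        rw [div_le_iff₀ hp2] at hle
        linarith
      have hcontat : ContinuousWithinAt (fun p => Hfun h₁ h₁' p - r * Hfun h₂ h₂' p) Set.univ b := by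
        apply ContinuousWithinAt.sub
        · exact (continuousAt_Hfun hd₁ hdd₁ ⟨hb0, hb1.le⟩ (ne_of_gt (h1pos b hbI))).continuousWithinAt
        · exact (continuousAt_const.mul (continuousAt_Hfun hd₂ hdd₂ ⟨hb0, hb1.le⟩ (ne_of_gt h2b))).continuousWithinAt
      have hfin : Hfun h₁ h₁' b - r * Hfun h₂ h₂' b ≤ 0 := by
        apply right_lim_le (a := w) (by linarith : w < b) hcontat (fun t _ => trivial) hbnd
      rw [hH2b] at hfin
      have := hH1pos b hbI
      linarith
  · -- no zero : everything positive
    push_neg at hQ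
    have hH2pos : ∀ p ∈ Set.Ioo (0:ℝ) 1, 0 < Hfun h₂ h₂' p :=
      fun p hp => lt_of_le_of_ne (hH2nn p hp) (Ne.symm (hQ p hp))
    refine ⟨?_, hH2pos⟩
    intro p hp
    by_contra hc
    push_neg at hc
    have h20 : h₂ p = 0 := le_antisymm hc (h_nonneg hmap₂ (Ioo_subset_Icc_self hp))
    have : Hfun h₂ h₂' p = 0 := by unfold Hfun; rw [h20, div_zero]
    exact absurd this (hQ p hp)

/-- In case (iii): structure of `h₁` from condition (i). -/
lemma h1_structure_of_cond_iii
    (hmap₁ : Set.MapsTo h₁ (Set.Icc 0 1) (Set.Icc 0 1))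
    (hmono₁ : MonotoneOn h₁ (Set.Icc 0 1))
    (hcont₁ : ContinuousOn h₁ (Set.Icc 0 1))
    (h₁0 : h₁ 0 = 0) (h₁1 : h₁ 1 = 1)
    (hd₁ : ∀ p ∈ Set.Icc (0:ℝ) 1, HasDerivAt h₁ (h₁' p) p)
    (hH2pos : ∀ p ∈ Set.Ioo (0:ℝ) 1, 0 < Hfun h₂ h₂' p)
    (cond_i : AntitoneOn (fun p => Hfun h₁ h₁' p / Hfun h₂ h₂' p) (Set.Ioo 0 1)) :
    (∀ p ∈ Set.Ioo (0:ℝ) 1, 0 < h₁ p) ∧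
    ∃ p₀, p₀ ∈ Set.Ioc (0:ℝ) 1 ∧ (∀ p ∈ Set.Ioo (0:ℝ) p₀, 0 < Hfun h₁ h₁' p) ∧
      (∀ p ∈ Set.Icc p₀ 1, h₁ p = 1) := by
  have hH1nn : ∀ p ∈ Set.Ioo (0:ℝ) 1, 0 ≤ Hfun h₁ h₁' p :=
    fun p hp => Hfun_nonneg hmap₁ hmono₁ hd₁ hp
  have upcl : ∀ p ∈ Set.Ioo (0:ℝ) 1, Hfun h₁ h₁' p = 0 →
      ∀ p' ∈ Set.Ioo (0:ℝ) 1, p ≤ p' → Hfun h₁ h₁' p' = 0 := by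
    intro p hp hp0 p' hp' hpp'
    have hr : Hfun h₁ h₁' p / Hfun h₂ h₂' p = 0 := by rw [hp0, zero_div]
    have hle := cond_i hp hp' hpp'
    dsimp only at hle
    rw [hr] at hle
    have h2p' := hH2pos p' hp'
    by_contra hne
    have hpos' : 0 < Hfun h₁ h₁' p' := lt_of_le_of_ne (hH1nn p' hp') (Ne.symm hne)
    have : 0 < Hfun h₁ h₁' p' / Hfun h₂ h₂' p' := div_pos hpos' h2p'
    linarith
  have h1pos : ∀ p ∈ Set.Ioo (0:ℝ) 1, 0 < h₁ p := by
    by_contra hcon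
    push_neg at hcon
    obtain ⟨c, hc, hc0'⟩ := hcon
    have hc0 : h₁ c = 0 := le_antisymm hc0' (h_nonneg hmap₁ (Ioo_subset_Icc_self hc))
    obtain ⟨a, haI, ha0, hapos⟩ := zero_sup hmap₁ hmono₁ hcont₁ h₁1 ⟨hc.1.le, hc.2⟩ hc0
    have ha0lt : 0 < a := lt_of_lt_of_le hc.1 haI.1
    have haIoo : a ∈ Set.Ioo (0:ℝ) 1 := ⟨ha0lt, haI.2⟩
    have hHa : Hfun h₁ h₁' a = 0 := by unfold Hfun; rw [ha0, div_zero]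
    apply flat_contra hmap₁ hmono₁ hcont₁ h₁1 hd₁
      (show a ∈ Set.Ico (0:ℝ) 1 from ⟨ha0lt.le, haI.2⟩) ha0
    intro p hp
    exact upcl a haIoo hHa p ⟨lt_trans ha0lt hp.1, hp.2⟩ hp.1.le
  refine ⟨h1pos, ?_⟩
  by_cases hP : ∃ z ∈ Set.Ioo (0:ℝ) 1, Hfun h₁ h₁' z = 0
  · obtain ⟨z, hz, hz0⟩ := hP
    set P := {p : ℝ | p ∈ Set.Ioo (0:ℝ) 1 ∧ Hfun h₁ h₁' p = 0} with hPdef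
    have hzP : z ∈ P := ⟨hz, hz0⟩
    have hbdd : BddBelow P := ⟨0, fun t ht => ht.1.1.le⟩
    set p₀ := sInf P with hp₀def
    have hp₀0 : 0 ≤ p₀ := le_csInf ⟨z, hzP⟩ (fun t ht => ht.1.1.le)
    have hp₀z : p₀ ≤ z := csInf_le hbdd hzP
    have hp₀1 : p₀ < 1 := lt_of_le_of_lt hp₀z hz.2
    have hPsup : ∀ p ∈ Set.Ioo (0:ℝ) 1, p₀ < p → Hfun h₁ h₁' p = 0 := by
      intro p hp hbp
      obtain ⟨t, htP, htp⟩ := exists_lt_of_csInf_lt ⟨z, hzP⟩ hbp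
      exact upcl t htP.1 htP.2 p hp htp.le
    have hp₀pos : 0 < p₀ := by
      rcases eq_or_lt_of_le hp₀0 with he | hlt
      · exfalso
        apply flat_contra hmap₁ hmono₁ hcont₁ h₁1 hd₁
          (show (0:ℝ) ∈ Set.Ico (0:ℝ) 1 from ⟨le_refl 0, zero_lt_one⟩) h₁0
        intro p hp
        exact hPsup p hp (by rw [← he]; exact hp.1)
      · exact hlt
    have h'zero : ∀ p ∈ Set.Ioo p₀ 1, h₁' p = 0 := by
      intro p hp
      have hpI : p ∈ Set.Ioo (0:ℝ) 1 := ⟨lt_trans hp₀pos hp.1, hp.2⟩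
      have hH0 := hPsup p hpI hp.1
      unfold Hfun at hH0
      rcases div_eq_zero_iff.1 hH0 with h2 | h2
      · rcases mul_eq_zero.1 h2 with h3 | h3
        · exact absurd h3 (ne_of_gt hpI.1)
        · exact h3
      · exact absurd h2 (ne_of_gt (h1pos p hpI))
    have hIccsub : Set.Ioo p₀ 1 ⊆ Set.Icc (0:ℝ) 1 := fun t ht =>
      ⟨(lt_trans hp₀pos ht.1).le, ht.2.le⟩
    set m := (p₀ + 1)/2 with hmdef
    have hmI : m ∈ Set.Ioo p₀ 1 := ⟨by simp only [hmdef]; linarith, by simp only [hmdef]; linarith⟩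
    have hconst : ∀ x ∈ Set.Ioo p₀ 1, h₁ x = h₁ m := fun x hx =>
      const_on_Ioo (fun t ht => hd₁ t (hIccsub ht)) h'zero hx hmI
    have hval1 : h₁ 1 = h₁ m := right_lim_const hp₀1 (hcont₁ 1 (right_mem_Icc.2 zero_le_one))
      hIccsub hconst
    have hvalp₀ : h₁ p₀ = h₁ m := left_lim_const hp₀1 (hcont₁ p₀ ⟨hp₀pos.le, hp₀1.le⟩)
      hIccsub hconst
    rw [h₁1] at hval1
    refine ⟨p₀, ⟨hp₀pos, hp₀1.le⟩, ?_, ?_⟩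
    · intro p hp
      have hpI : p ∈ Set.Ioo (0:ℝ) 1 := ⟨hp.1, hp.2.trans hp₀1⟩
      rcases (hH1nn p hpI).lt_or_eq with hlt | heq
      · exact hlt
      · exact absurd (csInf_le hbdd ⟨hpI, heq.symm⟩) (not_le.2 hp.2)
    · intro p hp
      rcases eq_or_lt_of_le hp.1 with he | hlt
      · rw [← he, hvalp₀, ← hval1]
      · rcases eq_or_lt_of_le hp.2 with he1 | hlt1
        · rw [he1, h₁1]
        · rw [hconst p ⟨hlt, hlt1⟩, ← hval1]
  · push_neg at hP
    refine ⟨1, ⟨zero_lt_one, le_refl 1⟩, ?_, ?_⟩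
    · intro p hp
      exact lt_of_le_of_ne (hH1nn p hp) (Ne.symm (hP p hp))
    · intro p hp
      have : p = 1 := le_antisymm hp.2 hp.1
      rw [this, h₁1]

end Transfer

section Core

lemma psi_mono {h : ℝ → ℝ} (hmono : MonotoneOn h (Set.Icc 0 1))
    (hpos : ∀ p ∈ Set.Ioo (0:ℝ) 1, 0 < h p)
    {u u' : ℝ} (hu : 0 < u) (huu : u ≤ u') : psi h u ≤ psi h u' := by
  unfold psi
  have hp := expnegmem' hu
  have hp' : Real.exp (-u') ∈ Set.Ioo (0:ℝ) 1 := expnegmem' (lt_of_lt_of_le hu huu)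
  have hle : Real.exp (-u') ≤ Real.exp (-u) := Real.exp_le_exp.2 (by linarith)
  have hmle : h (Real.exp (-u')) ≤ h (Real.exp (-u)) :=
    hmono (Ioo_subset_Icc_self hp') (Ioo_subset_Icc_self hp) hle
  have hlog := Real.log_le_log (hpos _ hp') hmle
  linarith

lemma core_ii
    {h₁ h₁' h₁'' h₂ h₂' h₂'' : ℝ → ℝ}
    (hmap₁ : Set.MapsTo h₁ (Set.Icc 0 1) (Set.Icc 0 1))
    (hmono₁ : MonotoneOn h₁ (Set.Icc 0 1))
    (hcont₁ : ContinuousOn h₁ (Set.Icc 0 1))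
    (h₁0 : h₁ 0 = 0) (h₁1 : h₁ 1 = 1)
    (hd₁ : ∀ p ∈ Set.Icc (0:ℝ) 1, HasDerivAt h₁ (h₁' p) p)
    (hdd₁ : ∀ p ∈ Set.Icc (0:ℝ) 1, HasDerivAt h₁' (h₁'' p) p)
    (hmap₂ : Set.MapsTo h₂ (Set.Icc 0 1) (Set.Icc 0 1))
    (hmono₂ : MonotoneOn h₂ (Set.Icc 0 1))
    (hcont₂ : ContinuousOn h₂ (Set.Icc 0 1))
    (h₂0 : h₂ 0 = 0) (h₂1 : h₂ 1 = 1)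
    (hd₂ : ∀ p ∈ Set.Icc (0:ℝ) 1, HasDerivAt h₂ (h₂' p) p)
    (hdd₂ : ∀ p ∈ Set.Icc (0:ℝ) 1, HasDerivAt h₂' (h₂'' p) p)
    (cond_i : AntitoneOn (fun p => Hfun h₁ h₁' p / Hfun h₂ h₂' p) (Set.Ioo 0 1))
    (hk₁ : kCond h₁ h₁')
    {u₁ v₁ u₂ v₂ : ℝ} (hu₁ : 0 < u₁) (hu12 : u₁ ≤ u₂) (huv₁ : u₁ ≤ v₁) (huv₂ : u₂ ≤ v₂)
    (hv12 : v₁ ≤ v₂) (hratio : u₁/v₁ ≤ u₂/v₂) :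
    psi h₁ u₁ / psi h₂ v₁ ≤ psi h₁ u₂ / psi h₂ v₂ := by
  obtain ⟨h1pos, hH1pos⟩ := h_and_H_pos hmap₁ hmono₁ hcont₁ h₁0 h₁1 hd₁ hdd₁ hk₁
  obtain ⟨h2pos, hH2pos⟩ := H2_pos_of_cond_i hmap₂ hmono₂ hcont₂ h₂0 h₂1 hd₂ hdd₂
    hd₁ hdd₁ h1pos hH1pos cond_i
  have hv₁ : 0 < v₁ := lt_of_lt_of_le hu₁ huv₁
  have hu₂ : 0 < u₂ := lt_of_lt_of_le hu₁ hu12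
  have hv₂ : 0 < v₂ := lt_of_lt_of_le hu₂ huv₂
  set a₁ := v₁/u₁ with ha₁def
  set a₂ := v₂/u₂ with ha₂def
  have ha₁ : 1 ≤ a₁ := (one_le_div hu₁).2 huv₁
  have ha₂ : 1 ≤ a₂ := (one_le_div hu₂).2 huv₂
  have hcross : u₁ * v₂ ≤ u₂ * v₁ := by
    have := (div_le_div_iff₀ hv₁ hv₂).1 hratio
    nlinarith [this]
  have ha₂₁ : a₂ ≤ a₁ := by
    rw [ha₁def, ha₂def, div_le_div_iff₀ hu₂ hu₁]
    nlinarith [hcross]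
  have ha₁u₁ : a₁ * u₁ = v₁ := div_mul_cancel₀ v₁ (ne_of_gt hu₁)
  have ha₂u₂ : a₂ * u₂ = v₂ := div_mul_cancel₀ v₂ (ne_of_gt hu₂)
  have hA := ratioD hcont₁ h₁1 hd₁ hdd₁ h1pos hH1pos hk₁ ha₁
    (Set.mem_Ioi.2 hu₁) (Set.mem_Ioi.2 hu₂) hu12
  dsimp only at hA
  rw [ha₁u₁] at hA
  have ha₂u₂pos : 0 < a₂ * u₂ := by nlinarith
  have hmono12 : psi h₁ (a₂*u₂) ≤ psi h₁ (a₁*u₂) :=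
    psi_mono hmono₁ h1pos ha₂u₂pos (by nlinarith)
  have hψa₂ : 0 < psi h₁ (a₂*u₂) := psi_pos hcont₁ h₁1 hd₁ h1pos hH1pos ha₂u₂pos
  have hψa₁ : 0 < psi h₁ (a₁*u₂) := psi_pos hcont₁ h₁1 hd₁ h1pos hH1pos (by nlinarith)
  have hψu₂nn : 0 ≤ psi h₁ u₂ := psi_nonneg hmap₁ hu₂.le
  have hA2 : psi h₁ u₂ / psi h₁ (a₁*u₂) ≤ psi h₁ u₂ / psi h₁ (a₂*u₂) := by
    rw [div_le_div_iff₀ hψa₁ hψa₂]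
    exact mul_le_mul_of_nonneg_left hmono12 hψu₂nn
  have hAfull : psi h₁ u₁ / psi h₁ v₁ ≤ psi h₁ u₂ / psi h₁ v₂ := by
    rw [← ha₂u₂]
    exact hA.trans hA2
  have hρ : MonotoneOn (fun s => Hfun h₁ h₁' (Real.exp (-s)) / Hfun h₂ h₂' (Real.exp (-s)))
      (Set.Ioi 0) := by
    intro s hs s' hs' hss
    have h1 : Real.exp (-s') ≤ Real.exp (-s) := Real.exp_le_exp.2 (by linarith)
    exact cond_i (expnegmem' (Set.mem_Ioi.1 hs')) (expnegmem' (Set.mem_Ioi.1 hs)) h1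
  have hB := ratioB hmap₁ hmono₁ h₁1 hd₁ hdd₁ h1pos hmap₂ hcont₂ h₂1 hd₂ hdd₂ h2pos hH2pos hρ
    (le_refl (0:ℝ)) (psi_zero h₁1) (Set.mem_Ioi.2 hv₁) (Set.mem_Ioi.2 hv₂) hv12
  dsimp only at hB
  have hψ₁v₁ : 0 < psi h₁ v₁ := psi_pos hcont₁ h₁1 hd₁ h1pos hH1pos hv₁
  have hψ₁v₂ : 0 < psi h₁ v₂ := psi_pos hcont₁ h₁1 hd₁ h1pos hH1pos hv₂
  have e1 : psi h₁ u₁ / psi h₂ v₁ = (psi h₁ u₁ / psi h₁ v₁) * (psi h₁ v₁ / psi h₂ v₁) := by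
    rw [div_mul_div_comm, mul_comm (psi h₁ v₁), mul_div_mul_right _ _ (ne_of_gt hψ₁v₁)]
  have e2 : psi h₁ u₂ / psi h₂ v₂ = (psi h₁ u₂ / psi h₁ v₂) * (psi h₁ v₂ / psi h₂ v₂) := by
    rw [div_mul_div_comm, mul_comm (psi h₁ v₂), mul_div_mul_right _ _ (ne_of_gt hψ₁v₂)]
  rw [e1, e2]
  exact mul_le_mul hAfull hB
    (div_nonneg hψ₁v₁.le (psi_nonneg hmap₂ hv₁.le))
    (div_nonneg (psi_nonneg hmap₁ hu₂.le) hψ₁v₂.le)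

lemma core_iii
    {h₁ h₁' h₁'' h₂ h₂' h₂'' : ℝ → ℝ}
    (hmap₁ : Set.MapsTo h₁ (Set.Icc 0 1) (Set.Icc 0 1))
    (hmono₁ : MonotoneOn h₁ (Set.Icc 0 1))
    (hcont₁ : ContinuousOn h₁ (Set.Icc 0 1))
    (h₁0 : h₁ 0 = 0) (h₁1 : h₁ 1 = 1)
    (hd₁ : ∀ p ∈ Set.Icc (0:ℝ) 1, HasDerivAt h₁ (h₁' p) p)
    (hdd₁ : ∀ p ∈ Set.Icc (0:ℝ) 1, HasDerivAt h₁' (h₁'' p) p)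
    (hmap₂ : Set.MapsTo h₂ (Set.Icc 0 1) (Set.Icc 0 1))
    (hmono₂ : MonotoneOn h₂ (Set.Icc 0 1))
    (hcont₂ : ContinuousOn h₂ (Set.Icc 0 1))
    (h₂0 : h₂ 0 = 0) (h₂1 : h₂ 1 = 1)
    (hd₂ : ∀ p ∈ Set.Icc (0:ℝ) 1, HasDerivAt h₂ (h₂' p) p)
    (hdd₂ : ∀ p ∈ Set.Icc (0:ℝ) 1, HasDerivAt h₂' (h₂'' p) p)
    (cond_i : AntitoneOn (fun p => Hfun h₁ h₁' p / Hfun h₂ h₂' p) (Set.Ioo 0 1))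
    (hk₂ : kCond h₂ h₂')
    {u₁ v₁ u₂ v₂ : ℝ} (hu₁ : 0 < u₁) (hu12 : u₁ ≤ u₂) (huv₁ : u₁ ≤ v₁) (huv₂ : u₂ ≤ v₂)
    (hv12 : v₁ ≤ v₂) (hratio : u₁/v₁ ≤ u₂/v₂) :
    psi h₁ u₁ / psi h₂ v₁ ≤ psi h₁ u₂ / psi h₂ v₂ := by
  obtain ⟨h2pos, hH2pos⟩ := h_and_H_pos hmap₂ hmono₂ hcont₂ h₂0 h₂1 hd₂ hdd₂ hk₂
  obtain ⟨h1pos, p₀, hp₀I, hH1lt, hplateau⟩ := h1_structure_of_cond_iii hmap₁ hmono₁ hcont₁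
    h₁0 h₁1 hd₁ hH2pos cond_i
  have hv₁ : 0 < v₁ := lt_of_lt_of_le hu₁ huv₁
  have hu₂ : 0 < u₂ := lt_of_lt_of_le hu₁ hu12
  have hv₂ : 0 < v₂ := lt_of_lt_of_le hu₂ huv₂
  by_cases hz : psi h₁ u₁ = 0
  · rw [hz, zero_div]
    exact div_nonneg (psi_nonneg hmap₁ hu₂.le) (psi_nonneg hmap₂ hv₂.le)
  · set u₀ := -Real.log p₀ with hu₀def
    have hu₀0 : 0 ≤ u₀ := by
      have := Real.log_nonpos hp₀I.1.le hp₀I.2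
      rw [hu₀def]; linarith
    have hexpu₀ : Real.exp (-u₀) = p₀ := by rw [hu₀def, neg_neg, Real.exp_log hp₀I.1]
    have hpsiu₀ : psi h₁ u₀ = 0 := by
      unfold psi
      rw [hexpu₀, hplateau p₀ (left_mem_Icc.2 hp₀I.2), Real.log_one, neg_zero]
    have hu₀u₁ : u₀ < u₁ := by
      by_contra hcon
      push_neg at hcon
      apply hz
      have hple : p₀ ≤ Real.exp (-u₁) := by
        rw [← hexpu₀]; exact Real.exp_le_exp.2 (by linarith)
      have hle1 : Real.exp (-u₁) ≤ 1 := (expnegmem hu₁.le).2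
      unfold psi
      rw [hplateau _ ⟨hple, hle1⟩, Real.log_one, neg_zero]
    set a₁ := v₁/u₁ with ha₁def
    set a₂ := v₂/u₂ with ha₂def
    have ha₁ : 1 ≤ a₁ := (one_le_div hu₁).2 huv₁
    have ha₂ : 1 ≤ a₂ := (one_le_div hu₂).2 huv₂
    have hcross : u₁ * v₂ ≤ u₂ * v₁ := by
      have := (div_le_div_iff₀ hv₁ hv₂).1 hratio
      nlinarith [this]
    have ha₂₁ : a₂ ≤ a₁ := by
      rw [ha₁def, ha₂def, div_le_div_iff₀ hu₂ hu₁]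
      nlinarith [hcross]
    have ha₁u₁ : a₁ * u₁ = v₁ := div_mul_cancel₀ v₁ (ne_of_gt hu₁)
    have ha₂u₂ : a₂ * u₂ = v₂ := div_mul_cancel₀ v₂ (ne_of_gt hu₂)
    have hA := ratioD hcont₂ h₂1 hd₂ hdd₂ h2pos hH2pos hk₂ ha₁
      (Set.mem_Ioi.2 hu₁) (Set.mem_Ioi.2 hu₂) hu12
    dsimp only at hA
    rw [ha₁u₁] at hA
    have ha₂u₂pos : 0 < a₂ * u₂ := by nlinarith
    have hmono12 : psi h₂ (a₂*u₂) ≤ psi h₂ (a₁*u₂) :=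
      psi_mono hmono₂ h2pos ha₂u₂pos (by nlinarith)
    have hψa₂ : 0 < psi h₂ (a₂*u₂) := psi_pos hcont₂ h₂1 hd₂ h2pos hH2pos ha₂u₂pos
    have hψa₁ : 0 < psi h₂ (a₁*u₂) := psi_pos hcont₂ h₂1 hd₂ h2pos hH2pos (by nlinarith)
    have hψu₂nn : 0 ≤ psi h₂ u₂ := psi_nonneg hmap₂ hu₂.le
    have hA2 : psi h₂ u₂ / psi h₂ (a₁*u₂) ≤ psi h₂ u₂ / psi h₂ (a₂*u₂) := by
      rw [div_le_div_iff₀ hψa₁ hψa₂]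
      exact mul_le_mul_of_nonneg_left hmono12 hψu₂nn
    have hAfull : psi h₂ u₁ / psi h₂ v₁ ≤ psi h₂ u₂ / psi h₂ v₂ := by
      rw [← ha₂u₂]
      exact hA.trans hA2
    have hρ : MonotoneOn (fun s => Hfun h₁ h₁' (Real.exp (-s)) / Hfun h₂ h₂' (Real.exp (-s)))
        (Set.Ioi 0) := by
      intro s hs s' hs' hss
      have h1 : Real.exp (-s') ≤ Real.exp (-s) := Real.exp_le_exp.2 (by linarith)
      exact cond_i (expnegmem' (Set.mem_Ioi.1 hs')) (expnegmem' (Set.mem_Ioi.1 hs)) h1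
    have hB := ratioB hmap₁ hmono₁ h₁1 hd₁ hdd₁ h1pos hmap₂ hcont₂ h₂1 hd₂ hdd₂ h2pos hH2pos hρ
      hu₀0 hpsiu₀ (Set.mem_Ioi.2 hu₀u₁) (Set.mem_Ioi.2 (lt_of_lt_of_le hu₀u₁ hu12)) hu12
    dsimp only at hB
    have hψ₂u₁ : 0 < psi h₂ u₁ := psi_pos hcont₂ h₂1 hd₂ h2pos hH2pos hu₁
    have hψ₂u₂ : 0 < psi h₂ u₂ := psi_pos hcont₂ h₂1 hd₂ h2pos hH2pos hu₂
    have e1 : psi h₁ u₁ / psi h₂ v₁ = (psi h₁ u₁ / psi h₂ u₁) * (psi h₂ u₁ / psi h₂ v₁) := by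
      rw [div_mul_div_comm, mul_comm (psi h₂ u₁), mul_div_mul_right _ _ (ne_of_gt hψ₂u₁)]
    have e2 : psi h₁ u₂ / psi h₂ v₂ = (psi h₁ u₂ / psi h₂ u₂) * (psi h₂ u₂ / psi h₂ v₂) := by
      rw [div_mul_div_comm, mul_comm (psi h₂ u₂), mul_div_mul_right _ _ (ne_of_gt hψ₂u₂)]
    rw [e1, e2]
    exact mul_le_mul hB hAfull
      (div_nonneg hψ₂u₁.le (psi_nonneg hmap₂ hv₁.le))
      (div_nonneg (psi_nonneg hmap₁ hu₂.le) hψ₂u₂.le)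

end Core

section Survival

lemma survival_nonneg (μ : Measure ℝ) (x : ℝ) : 0 ≤ survival μ x := ENNReal.toReal_nonneg

lemma survival_le_one (μ : Measure ℝ) [IsProbabilityMeasure μ] (x : ℝ) : survival μ x ≤ 1 := by
  unfold survival
  have h1 : μ (Set.Ioi x) ≤ 1 := prob_le_one
  calc (μ (Set.Ioi x)).toReal ≤ (1 : ENNReal).toReal := ENNReal.toReal_mono ENNReal.one_ne_top h1
    _ = 1 := by simp

lemma survival_antitone (μ : Measure ℝ) [IsProbabilityMeasure μ] {x y : ℝ} (hxy : x ≤ y) :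
    survival μ y ≤ survival μ x := by
  unfold survival
  exact ENNReal.toReal_mono (measure_ne_top μ _) (measure_mono (Set.Ioi_subset_Ioi hxy))

lemma survival_zero (μ : Measure ℝ) [IsProbabilityMeasure μ] (hac : μ ≪ volume)
    (hnn : μ (Set.Iio 0) = 0) : survival μ 0 = 1 := by
  unfold survival
  have h0 : μ {(0:ℝ)} = 0 := hac Real.volume_singleton
  have hIic : μ (Set.Iic 0) = 0 := by
    rw [← Set.Iio_union_right]
    exact measure_union_null hnn h0
  have hIoi : μ (Set.Ioi 0) = 1 := by
    have hcompl := measure_add_measure_compl (μ := μ) (measurableSet_Iic (a := (0:ℝ)))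
    rw [Set.compl_Iic, hIic, zero_add, measure_univ] at hcompl
    exact hcompl
  rw [hIoi]; simp

end Survival

end AgingAux

open AgingAux in
/-- Theorem 3.1: comparison of two coherent systems with possibly different
dual distortion functions with respect to the ageing faster order in the
cumulative hazard rate. -/
theorem coherent_aging_faster_cumHazard_two_systems
    (μX μY : Measure ℝ) [IsProbabilityMeasure μX] [IsProbabilityMeasure μY]
    -- absolutely continuous distributions
    (hXac : μX ≪ volume) (hYac : μY ≪ volume)
    -- supported on [0,∞)
    (hXnn : μX (Set.Iio 0) = 0) (hYnn : μY (Set.Iio 0) = 0)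
    (hXsupp : ∀ x > (0:ℝ), 0 < survival μX x ∧ survival μX x < 1)
    (hYsupp : ∀ x > (0:ℝ), 0 < survival μY x ∧ survival μY x < 1)
    -- h₁, h₂ are twice differentiable dual distortion functions
    (h₁ h₁' h₁'' h₂ h₂' h₂'' : ℝ → ℝ)
    (hmap₁ : Set.MapsTo h₁ (Set.Icc 0 1) (Set.Icc 0 1))
    (hmono₁ : MonotoneOn h₁ (Set.Icc 0 1))
    (hcont₁ : ContinuousOn h₁ (Set.Icc 0 1))
    (h₁0 : h₁ 0 = 0) (h₁1 : h₁ 1 = 1)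
    (hd₁ : ∀ p ∈ Set.Icc (0:ℝ) 1, HasDerivAt h₁ (h₁' p) p)
    (hdd₁ : ∀ p ∈ Set.Icc (0:ℝ) 1, HasDerivAt h₁' (h₁'' p) p)
    (hmap₂ : Set.MapsTo h₂ (Set.Icc 0 1) (Set.Icc 0 1))
    (hmono₂ : MonotoneOn h₂ (Set.Icc 0 1))
    (hcont₂ : ContinuousOn h₂ (Set.Icc 0 1))
    (h₂0 : h₂ 0 = 0) (h₂1 : h₂ 1 = 1)
    (hd₂ : ∀ p ∈ Set.Icc (0:ℝ) 1, HasDerivAt h₂ (h₂' p) p)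
    (hdd₂ : ∀ p ∈ Set.Icc (0:ℝ) 1, HasDerivAt h₂' (h₂'' p) p)
    -- (i) H₁(p)/H₂(p) is decreasing on (0,1)
    (cond_i : AntitoneOn (fun p => Hfun h₁ h₁' p / Hfun h₂ h₂' p) (Set.Ioo 0 1))
    -- (ii) or (iii): (1-p) Hᵢ'(p)/Hᵢ(p) is negative and decreasing on (0,1)
    (cond_ii_iii :
      ((∀ p ∈ Set.Ioo (0:ℝ) 1,
          (1 - p) * deriv (Hfun h₁ h₁') p / Hfun h₁ h₁' p ≤ 0) ∧
        AntitoneOn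
          (fun p => (1 - p) * deriv (Hfun h₁ h₁') p / Hfun h₁ h₁' p) (Set.Ioo 0 1)) ∨
      ((∀ p ∈ Set.Ioo (0:ℝ) 1,
          (1 - p) * deriv (Hfun h₂ h₂') p / Hfun h₂ h₂' p ≤ 0) ∧
        AntitoneOn
          (fun p => (1 - p) * deriv (Hfun h₂ h₂') p / Hfun h₂ h₂' p) (Set.Ioo 0 1)))
    -- (iv) X ≺_{c*} Y
    (cond_iv_age : MonotoneOn
        (fun x => (- Real.log (survival μX x)) / (- Real.log (survival μY x)))
        (Set.Ici 0))
    -- (iv) Y ≤_st X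
    (cond_iv_st : ∀ x : ℝ, survival μY x ≤ survival μX x) :
    -- conclusion : τ₁(X) ≺_{c*} τ₂(Y)
    MonotoneOn
      (fun x => (- Real.log (h₁ (survival μX x))) / (- Real.log (h₂ (survival μY x))))
      (Set.Ici 0) := by
  intro x₁ hx₁ x₂ hx₂ hle
  rw [Set.mem_Ici] at hx₁ hx₂
  dsimp only
  have nonneg2 : 0 ≤ (-Real.log (h₁ (survival μX x₂))) / (-Real.log (h₂ (survival μY x₂))) := by
    apply div_nonneg
    · have hs : survival μX x₂ ∈ Set.Icc (0:ℝ) 1 :=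
        ⟨survival_nonneg _ _, survival_le_one _ _⟩
      have := Real.log_nonpos (h_nonneg hmap₁ hs) (h_le_one hmap₁ hs)
      linarith
    · have hs : survival μY x₂ ∈ Set.Icc (0:ℝ) 1 :=
        ⟨survival_nonneg _ _, survival_le_one _ _⟩
      have := Real.log_nonpos (h_nonneg hmap₂ hs) (h_le_one hmap₂ hs)
      linarith
  rcases eq_or_lt_of_le hx₁ with he | hpos₁
  · rw [← he]
    have hs0 : survival μX 0 = 1 := survival_zero μX hXac hXnn
    rw [hs0, h₁1, Real.log_one, neg_zero, zero_div]
    exact nonneg2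
  · have hpos₂ : 0 < x₂ := lt_of_lt_of_le hpos₁ hle
    obtain ⟨hp₁0, hp₁1⟩ := hXsupp x₁ hpos₁
    obtain ⟨hp₂0, hp₂1⟩ := hXsupp x₂ hpos₂
    obtain ⟨hq₁0, hq₁1⟩ := hYsupp x₁ hpos₁
    obtain ⟨hq₂0, hq₂1⟩ := hYsupp x₂ hpos₂
    have hu₁pos : 0 < -Real.log (survival μX x₁) := by
      have := Real.log_neg hp₁0 hp₁1; linarith
    have hu12 : -Real.log (survival μX x₁) ≤ -Real.log (survival μX x₂) := by
      have hplee : survival μX x₂ ≤ survival μX x₁ := survival_antitone μX hle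
      have := Real.log_le_log hp₂0 hplee
      linarith
    have huv₁ : -Real.log (survival μX x₁) ≤ -Real.log (survival μY x₁) := by
      have := Real.log_le_log hq₁0 (cond_iv_st x₁); linarith
    have huv₂ : -Real.log (survival μX x₂) ≤ -Real.log (survival μY x₂) := by
      have := Real.log_le_log hq₂0 (cond_iv_st x₂); linarith
    have hv12 : -Real.log (survival μY x₁) ≤ -Real.log (survival μY x₂) := by
      have hqlee : survival μY x₂ ≤ survival μY x₁ := survival_antitone μY hle
      have := Real.log_le_log hq₂0 hqlee
      linarith
    have hratio := cond_iv_age (Set.mem_Ici.2 hx₁) (Set.mem_Ici.2 hx₂) hle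
    dsimp only at hratio
    have g1 : -Real.log (h₁ (survival μX x₁)) = psi h₁ (-Real.log (survival μX x₁)) := by
      unfold psi; rw [neg_neg, Real.exp_log hp₁0]
    have g2 : -Real.log (h₂ (survival μY x₁)) = psi h₂ (-Real.log (survival μY x₁)) := by
      unfold psi; rw [neg_neg, Real.exp_log hq₁0]
    have g3 : -Real.log (h₁ (survival μX x₂)) = psi h₁ (-Real.log (survival μX x₂)) := by
      unfold psi; rw [neg_neg, Real.exp_log hp₂0]
    have g4 : -Real.log (h₂ (survival μY x₂)) = psi h₂ (-Real.log (survival μY x₂)) := by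
      unfold psi; rw [neg_neg, Real.exp_log hq₂0]
    rw [g1, g2, g3, g4]
    rcases cond_ii_iii with hk | hk
    · exact core_ii hmap₁ hmono₁ hcont₁ h₁0 h₁1 hd₁ hdd₁ hmap₂ hmono₂ hcont₂ h₂0 h₂1 hd₂ hdd₂
        cond_i ⟨hk.1, hk.2⟩ hu₁pos hu12 huv₁ huv₂ hv12 hratio
    · exact core_iii hmap₁ hmono₁ hcont₁ h₁0 h₁1 hd₁ hdd₁ hmap₂ hmono₂ hcont₂ h₂0 h₂1 hd₂ hdd₂
        cond_i ⟨hk.1, hk.2⟩ hu₁pos hu12 huv₁ huv₂ hv12 hratio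
end

section
/- Let 𝒳 and 𝒴 be subsets of ℝ, let μ be a sigma-finite measure on 𝒴, and let κ:𝒳×𝒴→(0,∞) be RR₂, i.e., κ(x₁,y₁)κ(x₂,y₂) ≤ κ(x₁,y₂)κ(x₂,y₁) for all x₁ ≤ x₂ in 𝒳 and y₁ ≤ y₂ in 𝒴. Let f:𝒳×𝒴→ℝ be such that (i) for each x∈𝒳, f(x,·) changes sign at most once and only from positive to negative as y increases (i.e., there are no y₁ < y₂ with f(x,y₁) < 0 < f(x,y₂)); (ii) for each y∈𝒴, f(x,y) is increasing in x; (iii) ω(x) = ∫_𝒴 κ(x,y) f(x,y) dμ(y) exists absolutely and is continuous in x. Then ω changes sign at most once on 𝒳, and if it does change sign, it is from negative to positive as x increases (i.e., there are no x₁ < x₂ with ω(x₁) > 0 > ω(x₂)). -/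
open MeasureTheory Set


lemma ae_restrict_le_of_forall_le {α : Type*} [MeasurableSpace α] {μ : Measure α}
    {s : Set α} {g h : α → ℝ}
    (hg : AEStronglyMeasurable g (μ.restrict s))
    (hh : AEStronglyMeasurable h (μ.restrict s))
    (hle : ∀ y ∈ s, g y ≤ h y) : g ≤ᵐ[μ.restrict s] h := by
  set ν := μ.restrict s with hν
  set g' := hg.mk g with hg'
  set h' := hh.mk h with hh'
  have eg : g =ᵐ[ν] g' := hg.ae_eq_mk
  have eh : h =ᵐ[ν] h' := hh.ae_eq_mk
  have hE : ν ({y | g y ≠ g' y} ∪ {y | h y ≠ h' y}) = 0 := by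
    apply measure_union_null
    · exact eg
    · exact eh
  set N := toMeasurable ν ({y | g y ≠ g' y} ∪ {y | h y ≠ h' y}) with hN
  have hNmeas : MeasurableSet N := measurableSet_toMeasurable _ _
  have hNnull : ν N = 0 := by rw [hN, measure_toMeasurable]; exact hE
  have hsubN : ({y | g y ≠ g' y} ∪ {y | h y ≠ h' y}) ⊆ N := subset_toMeasurable _ _
  set B := {y | h' y < g' y} with hB
  have hBmeas : MeasurableSet B :=
    measurableSet_lt hh.stronglyMeasurable_mk.measurable hg.stronglyMeasurable_mk.measurable
  have hBN : ν (B ∩ Nᶜ) = 0 := by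
    rw [hν, Measure.restrict_apply (hBmeas.inter hNmeas.compl)]
    convert measure_empty (μ := μ)
    ext y
    simp only [mem_inter_iff, mem_empty_iff_false, iff_false]
    rintro ⟨⟨hyB, hyN⟩, hys⟩
    have hgy : g y = g' y := by
      by_contra hc
      exact hyN (hsubN (Or.inl hc))
    have hhy : h y = h' y := by
      by_contra hc
      exact hyN (hsubN (Or.inr hc))
    have := hle y hys
    rw [hgy, hhy] at this
    exact absurd hyB (not_lt.2 this)
  have : ν {y | ¬ g y ≤ h y} = 0 := by
    apply measure_mono_null (t := (B ∩ Nᶜ) ∪ N) ?_ (measure_union_null hBN hNnull)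
    intro y hy
    simp only [mem_setOf_eq, not_le] at hy
    by_cases hyN : y ∈ N
    · exact Or.inr hyN
    · left
      refine ⟨?_, hyN⟩
      have hgy : g y = g' y := by
        by_contra hc; exact hyN (hsubN (Or.inl hc))
      have hhy : h y = h' y := by
        by_contra hc; exact hyN (hsubN (Or.inr hc))
      simp only [B, mem_setOf_eq, ← hgy, ← hhy]
      exact hy
  exact this

/-- Lemma 2.1 (RR₂ case): if `κ > 0` is RR₂ on `𝒳 × 𝒴`, for each `x ∈ 𝒳` the
function `f(x,·)` changes sign at most once and only from positive to
negative, for each `y ∈ 𝒴` the function `f(·,y)` is increasing on `𝒳`, and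
`ω(x) = ∫_𝒴 κ(x,y) f(x,y) dμ(y)` exists absolutely and is continuous on `𝒳`,
then `ω` changes sign at most once, and if it does, only from negative to
positive. -/
theorem sign_change_lemma_RR2
    (𝒳 𝒴 : Set ℝ) (μ : Measure ℝ) [SigmaFinite μ]
    (κ f : ℝ → ℝ → ℝ) (ω : ℝ → ℝ)
    -- κ is positive
    (hκpos : ∀ x ∈ 𝒳, ∀ y ∈ 𝒴, 0 < κ x y)
    -- κ is RR₂
    (hκRR2 : ∀ x₁ ∈ 𝒳, ∀ x₂ ∈ 𝒳, x₁ ≤ x₂ → ∀ y₁ ∈ 𝒴, ∀ y₂ ∈ 𝒴, y₁ ≤ y₂ →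
      κ x₁ y₁ * κ x₂ y₂ ≤ κ x₁ y₂ * κ x₂ y₁)
    -- (i) for each x, f(x,·) changes sign at most once, from + to -
    (hf_sign : ∀ x ∈ 𝒳, ∀ y₁ ∈ 𝒴, ∀ y₂ ∈ 𝒴, y₁ < y₂ →
      ¬ (f x y₁ < 0 ∧ 0 < f x y₂))
    -- (ii) for each y, f(·,y) is increasing in x
    (hf_mono : ∀ y ∈ 𝒴, ∀ x₁ ∈ 𝒳, ∀ x₂ ∈ 𝒳, x₁ ≤ x₂ → f x₁ y ≤ f x₂ y)
    -- (iii) ω(x) = ∫_𝒴 κ(x,y) f(x,y) dμ(y) exists absolutely and is continuous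
    (hint : ∀ x ∈ 𝒳, IntegrableOn (fun y => κ x y * f x y) 𝒴 μ)
    (hω : ∀ x ∈ 𝒳, ω x = ∫ y in 𝒴, κ x y * f x y ∂μ)
    (hωcont : ContinuousOn ω 𝒳) :
    -- ω changes sign at most once, from - to +
    ∀ x₁ ∈ 𝒳, ∀ x₂ ∈ 𝒳, x₁ < x₂ → ¬ (0 < ω x₁ ∧ ω x₂ < 0) := by
  rintro x₁ hx₁ x₂ hx₂ hx ⟨hω₁, hω₂⟩
  by_cases hN : ∃ n ∈ 𝒴, f x₁ n < 0
  · by_cases hP : ∃ p ∈ 𝒴, 0 < f x₁ p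
    · -- main case
      obtain ⟨n₀, hn₀Y, hn₀⟩ := hN
      obtain ⟨p₀, hp₀Y, hp₀⟩ := hP
      -- every positive point precedes every negative point
      have hPN : ∀ p ∈ 𝒴, 0 < f x₁ p → ∀ n ∈ 𝒴, f x₁ n < 0 → p < n := by
        intro p hp hfp n hn hfn
        rcases lt_trichotomy p n with h | h | h
        · exact h
        · exact absurd (h ▸ hfp) (not_lt.2 hfn.le)
        · exact absurd ⟨hfn, hfp⟩ (hf_sign x₁ hx₁ n hn p hp h)
      -- the ratio κ x₂ y / κ x₁ y is decreasing in y
      have hratio : ∀ a ∈ 𝒴, ∀ b ∈ 𝒴, a ≤ b → κ x₂ b / κ x₁ b ≤ κ x₂ a / κ x₁ a := by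
        intro a ha b hb hab
        rw [div_le_div_iff₀ (hκpos x₁ hx₁ b hb) (hκpos x₁ hx₁ a ha)]
        have := hκRR2 x₁ hx₁ x₂ hx₂ hx.le a ha b hb hab
        nlinarith
      set Nset : Set ℝ := {n | n ∈ 𝒴 ∧ f x₁ n < 0} with hNset
      set R : Set ℝ := (fun n => κ x₂ n / κ x₁ n) '' Nset with hR
      have hRne : R.Nonempty := ⟨_, ⟨n₀, ⟨hn₀Y, hn₀⟩, rfl⟩⟩
      have hRbdd : BddAbove R := by
        refine ⟨κ x₂ p₀ / κ x₁ p₀, ?_⟩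
        rintro r ⟨n, ⟨hnY, hnneg⟩, rfl⟩
        exact hratio p₀ hp₀Y n hnY (hPN p₀ hp₀Y hp₀ n hnY hnneg).le
      set c : ℝ := sSup R with hc
      have hcpos : 0 < c := by
        have : κ x₂ n₀ / κ x₁ n₀ ≤ c := le_csSup hRbdd ⟨n₀, ⟨hn₀Y, hn₀⟩, rfl⟩
        have hpos : 0 < κ x₂ n₀ / κ x₁ n₀ :=
          div_pos (hκpos x₂ hx₂ n₀ hn₀Y) (hκpos x₁ hx₁ n₀ hn₀Y)
        linarith
      -- pointwise key inequality on 𝒴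
      have hkey : ∀ y ∈ 𝒴, c * (κ x₁ y * f x₁ y) ≤ κ x₂ y * f x₂ y := by
        intro y hy
        have hκ₁ := hκpos x₁ hx₁ y hy
        have hκ₂ := hκpos x₂ hx₂ y hy
        have hstep : κ x₂ y * f x₁ y ≤ κ x₂ y * f x₂ y :=
          mul_le_mul_of_nonneg_left (hf_mono y hy x₁ hx₁ x₂ hx₂ hx.le) hκ₂.le
        refine le_trans ?_ hstep
        rcases lt_trichotomy (f x₁ y) 0 with hfy | hfy | hfy
        · -- y is a negative point : ratio at y ≤ c
          have hyc : κ x₂ y / κ x₁ y ≤ c := le_csSup hRbdd ⟨y, ⟨hy, hfy⟩, rfl⟩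
          have : κ x₂ y ≤ c * κ x₁ y := by
            rw [div_le_iff₀ hκ₁] at hyc; linarith
          nlinarith
        · simp [hfy]
        · -- y is a positive point : c ≤ ratio at y
          have hyc : c ≤ κ x₂ y / κ x₁ y := by
            apply csSup_le hRne
            rintro r ⟨n, ⟨hnY, hnneg⟩, rfl⟩
            exact hratio y hy n hnY (hPN y hy hfy n hnY hnneg).le
          have : c * κ x₁ y ≤ κ x₂ y := by
            rw [le_div_iff₀ hκ₁] at hyc; linarith
          nlinarith
      have hG : Integrable (fun y => c * (κ x₁ y * f x₁ y)) (μ.restrict 𝒴) :=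
        (hint x₁ hx₁).const_mul c
      have hF : Integrable (fun y => κ x₂ y * f x₂ y) (μ.restrict 𝒴) := hint x₂ hx₂
      have hae := ae_restrict_le_of_forall_le hG.aestronglyMeasurable
        hF.aestronglyMeasurable hkey
      have hineq : c * ω x₁ ≤ ω x₂ := by
        rw [hω x₁ hx₁, hω x₂ hx₂, ← integral_const_mul]
        exact integral_mono_ae hG hF hae
      nlinarith
    · -- f x₁ ≤ 0 on 𝒴, so ω x₁ ≤ 0, contradiction
      push_neg at hP
      have hle : ∀ y ∈ 𝒴, κ x₁ y * f x₁ y ≤ (fun _ => (0:ℝ)) y := by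
        intro y hy
        exact mul_nonpos_of_nonneg_of_nonpos (hκpos x₁ hx₁ y hy).le (hP y hy)
      have hae := ae_restrict_le_of_forall_le (hint x₁ hx₁).aestronglyMeasurable
        aestronglyMeasurable_const hle
      have : ω x₁ ≤ 0 := by
        rw [hω x₁ hx₁]
        calc ∫ y in 𝒴, κ x₁ y * f x₁ y ∂μ ≤ ∫ _ in 𝒴, (0:ℝ) ∂μ :=
              integral_mono_ae (hint x₁ hx₁) (integrable_zero _ _ _) hae
          _ = 0 := by simp
      linarith
  · -- f x₁ ≥ 0 on 𝒴, so f x₂ ≥ 0 on 𝒴, so ω x₂ ≥ 0, contradiction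
    push_neg at hN
    have hle : ∀ y ∈ 𝒴, (fun _ => (0:ℝ)) y ≤ κ x₂ y * f x₂ y := by
      intro y hy
      exact mul_nonneg (hκpos x₂ hx₂ y hy).le
        (le_trans (hN y hy) (hf_mono y hy x₁ hx₁ x₂ hx₂ hx.le))
    have hae := ae_restrict_le_of_forall_le aestronglyMeasurable_const
      (hint x₂ hx₂).aestronglyMeasurable hle
    have : 0 ≤ ω x₂ := by
      rw [hω x₂ hx₂]
      exact integral_nonneg_of_ae hae
    linarith
end

section
/- Let 𝒳 and 𝒴 be subsets of ℝ, let μ be a sigma-finite measure on 𝒴, and let κ:𝒳×𝒴→(0,∞) be TP₂, i.e., κ(x₁,y₁)κ(x₂,y₂) ≥ κ(x₁,y₂)κ(x₂,y₁) for all x₁ ≤ x₂ in 𝒳 and y₁ ≤ y₂ in 𝒴. Let f:𝒳×𝒴→ℝ be such that (i) for each x∈𝒳, f(x,·) changes sign at most once and only from positive to negative as y increases; (ii) for each y∈𝒴, f(x,y) is decreasing in x; (iii) ω(x) = ∫_𝒴 κ(x,y) f(x,y) dμ(y) exists absolutely and is continuous in x. Then ω changes sign at most once on 𝒳, and if it does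 change sign, it is from positive to negative as x increases (i.e., there are no x₁ < x₂ with ω(x₁) < 0 < ω(x₂)). -/
open MeasureTheory Set

lemma setIntegral_nonneg_of_forall_mem {μ : Measure ℝ} {s : Set ℝ} {F : ℝ → ℝ}
    (hF : IntegrableOn F s μ) (h : ∀ y ∈ s, 0 ≤ F y) :
    0 ≤ ∫ y in s, F y ∂μ := by
  set ν := μ.restrict s with hν
  have hm := hF.aestronglyMeasurable
  set G := hm.mk F with hG
  have hFG : F =ᵐ[ν] G := hm.ae_eq_mk
  have hGmeas : StronglyMeasurable G := hm.stronglyMeasurable_mk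
  rw [integral_congr_ae hFG]
  apply integral_nonneg_of_ae
  have hNnull : ν {y | F y ≠ G y} = 0 := by
    have := hFG
    rw [Filter.EventuallyEq, ae_iff] at this
    exact this
  have hB : MeasurableSet {y | G y < 0} :=
    hGmeas.measurable measurableSet_Iio
  rw [Filter.EventuallyLE, ae_iff]
  simp only [Pi.zero_apply]
  have hsub : {y | ¬ 0 ≤ G y} ∩ s ⊆ toMeasurable ν {y | F y ≠ G y} := by
    intro y hy
    apply subset_toMeasurable
    have h1 : G y < 0 := lt_of_not_ge hy.1
    have h2 : 0 ≤ F y := h y hy.2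
    exact fun he => absurd (he ▸ h2) (not_le.mpr h1)
  have hBeq : {y | ¬ 0 ≤ G y} = {y | G y < 0} := by
    ext y; simp [not_le]
  rw [hBeq, hν, Measure.restrict_apply hB]
  have : μ ({y | G y < 0} ∩ s) ≤ μ (toMeasurable ν {y | F y ≠ G y} ∩ s) := by
    apply measure_mono
    intro y hy
    exact ⟨hsub ⟨by simp [not_le, hy.1], hy.2⟩, hy.2⟩
  have h0 : μ (toMeasurable ν {y | F y ≠ G y} ∩ s) = 0 := by
    have := Measure.restrict_apply (μ := μ) (s := s)
      (measurableSet_toMeasurable ν {y | F y ≠ G y})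
    rw [← this, measure_toMeasurable]
    exact hNnull
  exact le_antisymm (h0 ▸ this) zero_le


/-- Lemma 2.1 (TP₂ case): if `κ > 0` is TP₂ on `𝒳 × 𝒴`, for each `x ∈ 𝒳` the
function `f(x,·)` changes sign at most once and only from positive to
negative, for each `y ∈ 𝒴` the function `f(·,y)` is decreasing on `𝒳`, and
`ω(x) = ∫_𝒴 κ(x,y) f(x,y) dμ(y)` exists absolutely and is continuous on `𝒳`,
then `ω` changes sign at most once, and if it does, only from positive to
negative. -/
theorem sign_change_lemma_TP2
    (𝒳 𝒴 : Set ℝ) (μ : Measure ℝ) [SigmaFinite μ]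
    (κ f : ℝ → ℝ → ℝ) (ω : ℝ → ℝ)
    -- κ is positive
    (hκpos : ∀ x ∈ 𝒳, ∀ y ∈ 𝒴, 0 < κ x y)
    -- κ is TP₂
    (hκTP2 : ∀ x₁ ∈ 𝒳, ∀ x₂ ∈ 𝒳, x₁ ≤ x₂ → ∀ y₁ ∈ 𝒴, ∀ y₂ ∈ 𝒴, y₁ ≤ y₂ →
      κ x₁ y₂ * κ x₂ y₁ ≤ κ x₁ y₁ * κ x₂ y₂)
    -- (i) for each x, f(x,·) changes sign at most once, from + to -
    (hf_sign : ∀ x ∈ 𝒳, ∀ y₁ ∈ 𝒴, ∀ y₂ ∈ 𝒴, y₁ < y₂ →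
      ¬ (f x y₁ < 0 ∧ 0 < f x y₂))
    -- (ii) for each y, f(·,y) is decreasing in x
    (hf_anti : ∀ y ∈ 𝒴, ∀ x₁ ∈ 𝒳, ∀ x₂ ∈ 𝒳, x₁ ≤ x₂ → f x₂ y ≤ f x₁ y)
    -- (iii) ω(x) = ∫_𝒴 κ(x,y) f(x,y) dμ(y) exists absolutely and is continuous
    (hint : ∀ x ∈ 𝒳, IntegrableOn (fun y => κ x y * f x y) 𝒴 μ)
    (hω : ∀ x ∈ 𝒳, ω x = ∫ y in 𝒴, κ x y * f x y ∂μ)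
    (hωcont : ContinuousOn ω 𝒳) :
    -- ω changes sign at most once, from + to -
    ∀ x₁ ∈ 𝒳, ∀ x₂ ∈ 𝒳, x₁ < x₂ → ¬ (ω x₁ < 0 ∧ 0 < ω x₂) := by
  rintro x₁ hx₁ x₂ hx₂ hx ⟨hω1, hω2⟩
  -- sets where f x₂ is positive / negative on 𝒴
  set P : Set ℝ := {y ∈ 𝒴 | 0 < f x₂ y} with hP
  set N : Set ℝ := {y ∈ 𝒴 | f x₂ y < 0} with hN
  -- ratio
  set r : ℝ → ℝ := fun y => κ x₁ y / κ x₂ y with hr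
  have hrpos : ∀ y ∈ 𝒴, 0 < r y := fun y hy =>
    div_pos (hκpos x₁ hx₁ y hy) (hκpos x₂ hx₂ y hy)
  -- P lies to the left of N, and r is decreasing along 𝒴
  have hPN : ∀ yp ∈ P, ∀ yn ∈ N, yp ≤ yn := by
    rintro yp ⟨hyp, hfp⟩ yn ⟨hyn, hfn⟩
    by_contra hc
    exact hf_sign x₂ hx₂ yn hyn yp hyp (lt_of_not_ge hc) ⟨hfn, hfp⟩
  have hrmono : ∀ y₁ ∈ 𝒴, ∀ y₂ ∈ 𝒴, y₁ ≤ y₂ → r y₂ ≤ r y₁ := by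
    intro a ha b hb hab
    have h := hκTP2 x₁ hx₁ x₂ hx₂ hx.le a ha b hb hab
    rw [hr, div_le_div_iff₀ (hκpos x₂ hx₂ b hb) (hκpos x₂ hx₂ a ha)]
    linarith [h]
  -- Case: N empty → f x₂ ≥ 0 on 𝒴 → ω x₁ ≥ 0, contradiction
  by_cases hNne : N.Nonempty
  · by_cases hPne : P.Nonempty
    · -- both nonempty: take c = sInf (r '' P)
      obtain ⟨yn, hyn⟩ := hNne
      have hbdd : ∀ y ∈ P, r yn ≤ r y := by
        intro y hy
        exact hrmono y hy.1 yn hyn.1 (hPN y hy yn hyn)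
      have hbddBelow : BddBelow (r '' P) := by
        refine ⟨r yn, ?_⟩
        rintro z ⟨y, hy, rfl⟩; exact hbdd y hy
      set c : ℝ := sInf (r '' P) with hc
      have hcpos : 0 < c := by
        have : r yn ≤ c := le_csInf (hPne.image r)
          (by rintro z ⟨y, hy, rfl⟩; exact hbdd y hy)
        exact lt_of_lt_of_le (hrpos yn hyn.1) this
      have hcleP : ∀ y ∈ P, c ≤ r y := fun y hy =>
        csInf_le hbddBelow ⟨y, hy, rfl⟩
      have hcgeN : ∀ y ∈ N, r y ≤ c := by
        intro y hy
        apply le_csInf (hPne.image r)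
        rintro z ⟨y', hy', rfl⟩
        exact hrmono y' hy'.1 y hy.1 (hPN y' hy' y hy)
      -- pointwise inequality on 𝒴
      have hpt : ∀ y ∈ 𝒴, c * (κ x₂ y * f x₂ y) ≤ κ x₁ y * f x₁ y := by
        intro y hy
        have hκ1 := hκpos x₁ hx₁ y hy
        have hκ2 := hκpos x₂ hx₂ y hy
        have hstep : κ x₁ y * f x₂ y ≤ κ x₁ y * f x₁ y :=
          mul_le_mul_of_nonneg_left (hf_anti y hy x₁ hx₁ x₂ hx₂ hx.le) hκ1.le
        have hrk : r y * κ x₂ y = κ x₁ y := div_mul_cancel₀ _ hκ2.ne'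
        rcases lt_trichotomy (f x₂ y) 0 with hneg | hzero | hpos
        · have h1 : r y ≤ c := hcgeN y ⟨hy, hneg⟩
          have h2 : c * (κ x₂ y * f x₂ y) ≤ r y * (κ x₂ y * f x₂ y) := by
            have : κ x₂ y * f x₂ y ≤ 0 := mul_nonpos_of_nonneg_of_nonpos hκ2.le hneg.le
            exact mul_le_mul_of_nonpos_right h1 this
          calc c * (κ x₂ y * f x₂ y) ≤ r y * (κ x₂ y * f x₂ y) := h2
            _ = κ x₁ y * f x₂ y := by rw [← mul_assoc, hrk]
            _ ≤ κ x₁ y * f x₁ y := hstep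
        · rw [hzero, mul_zero, mul_zero]
          calc (0:ℝ) = κ x₁ y * f x₂ y := by rw [hzero, mul_zero]
            _ ≤ κ x₁ y * f x₁ y := hstep
        · have h1 : c ≤ r y := hcleP y ⟨hy, hpos⟩
          have h2 : c * (κ x₂ y * f x₂ y) ≤ r y * (κ x₂ y * f x₂ y) := by
            have : 0 ≤ κ x₂ y * f x₂ y := mul_nonneg hκ2.le hpos.le
            exact mul_le_mul_of_nonneg_right h1 this
          calc c * (κ x₂ y * f x₂ y) ≤ r y * (κ x₂ y * f x₂ y) := h2
            _ = κ x₁ y * f x₂ y := by rw [← mul_assoc, hrk]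
            _ ≤ κ x₁ y * f x₁ y := hstep
      -- integrate
      have hI : IntegrableOn
          (fun y => κ x₁ y * f x₁ y - c * (κ x₂ y * f x₂ y)) 𝒴 μ :=
        (hint x₁ hx₁).sub ((hint x₂ hx₂).const_mul c)
      have hnn := setIntegral_nonneg_of_forall_mem hI
        (fun y hy => by simpa using hpt y hy)
      rw [integral_sub (hint x₁ hx₁) ((hint x₂ hx₂).const_mul c),
        integral_const_mul] at hnn
      rw [← hω x₁ hx₁, ← hω x₂ hx₂] at hnn
      have : 0 < c * ω x₂ := mul_pos hcpos hω2
      linarith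
    · -- P empty: f x₂ ≤ 0 on 𝒴 ⇒ ω x₂ ≤ 0
      have hle : ∀ y ∈ 𝒴, 0 ≤ -(κ x₂ y * f x₂ y) := by
        intro y hy
        have hfy : f x₂ y ≤ 0 := by
          by_contra hcon
          exact hPne ⟨y, hy, lt_of_not_ge hcon⟩
        have := mul_nonpos_of_nonneg_of_nonpos (hκpos x₂ hx₂ y hy).le hfy
        linarith
      have := setIntegral_nonneg_of_forall_mem ((hint x₂ hx₂).neg) hle
      simp only [Pi.neg_apply] at this
      rw [integral_neg, ← hω x₂ hx₂] at this
      linarith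
  · -- N empty: f x₂ ≥ 0 on 𝒴 ⇒ f x₁ ≥ 0 on 𝒴 ⇒ ω x₁ ≥ 0
    have hle : ∀ y ∈ 𝒴, 0 ≤ κ x₁ y * f x₁ y := by
      intro y hy
      have hfy2 : 0 ≤ f x₂ y := by
        by_contra hcon
        exact hNne ⟨y, hy, lt_of_not_ge hcon⟩
      have hfy1 : 0 ≤ f x₁ y := hfy2.trans (hf_anti y hy x₁ hx₁ x₂ hx₂ hx.le)
      exact mul_nonneg (hκpos x₁ hx₁ y hy).le hfy1
    have := setIntegral_nonneg_of_forall_mem (hint x₁ hx₁) hle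
    rw [← hω x₁ hx₁] at this
    linarith
end

section
/- For positive integers 1 ≤ k ≤ n and 1 ≤ l ≤ m with k ≤ l and m−l ≤ n−k, let h_{k|n}(p) = Σ_{i=k}^{n} C(n,i) p^i (1−p)^{n−i} and h_{l|m}(p) = Σ_{i=l}^{m} C(m,i) p^i (1−p)^{m−i}, and define H_{k|n}(p) = p·h_{k|n}'(p)/h_{k|n}(p) and H_{l|m}(p) = p·h_{l|m}'(p)/h_{l|m}(p) for p∈(0,1). Then H_{k|n}(p)/H_{l|m}(p) is decreasing in p∈(0,1). -/
open Set

noncomputable def hkn (k n : ℕ) (p : ℝ) : ℝ :=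
  ∑ i ∈ Finset.Icc k n, (n.choose i : ℝ) * p ^ i * (1 - p) ^ (n - i)

noncomputable def Hkn (k n : ℕ) (p : ℝ) : ℝ := p * deriv (hkn k n) p / hkn k n p

/-! ### Auxiliary lemmas -/

lemma choose_cross (k n l m : ℕ) (hkl : k ≤ l) (hml : m - l ≤ n - k) :
    ∀ d i, m.choose (l + i + d) * n.choose (k + i) ≤ m.choose (l + i) * n.choose (k + i + d) := by
  intro d
  induction d with
  | zero => intro i; simp [Nat.mul_comm]
  | succ d ih =>
    intro i
    have IH := ih i
    have h1 : m.choose (l + i + d + 1) * (l + i + d + 1) = m.choose (l + i + d) * (m - (l + i + d)) :=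
      Nat.choose_succ_right_eq m (l + i + d)
    have h2 : n.choose (k + i + d + 1) * (k + i + d + 1) = n.choose (k + i + d) * (n - (k + i + d)) :=
      Nat.choose_succ_right_eq n (k + i + d)
    have hsub : m - (l + i + d) ≤ n - (k + i + d) := by omega
    have hfac : k + i + d + 1 ≤ l + i + d + 1 := by omega
    have key : m.choose (l + i + (d + 1)) * n.choose (k + i) * ((l + i + d + 1) * (k + i + d + 1))
        ≤ m.choose (l + i) * n.choose (k + i + (d + 1)) * ((l + i + d + 1) * (k + i + d + 1)) := by
      calc m.choose (l + i + (d + 1)) * n.choose (k + i) * ((l + i + d + 1) * (k + i + d + 1))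
          = (m.choose (l + i + d + 1) * (l + i + d + 1)) * (n.choose (k + i) * (k + i + d + 1)) := by
            rw [show l + i + (d + 1) = l + i + d + 1 by omega]; ring
        _ = (m.choose (l + i + d) * (m - (l + i + d))) * (n.choose (k + i) * (k + i + d + 1)) := by
            rw [h1]
        _ = (m.choose (l + i + d) * n.choose (k + i)) * ((m - (l + i + d)) * (k + i + d + 1)) := by
            ring
        _ ≤ (m.choose (l + i) * n.choose (k + i + d)) * ((n - (k + i + d)) * (l + i + d + 1)) :=
            Nat.mul_le_mul IH (Nat.mul_le_mul hsub hfac)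
        _ = (n.choose (k + i + d) * (n - (k + i + d))) * (m.choose (l + i) * (l + i + d + 1)) := by
            ring
        _ = (n.choose (k + i + d + 1) * (k + i + d + 1)) * (m.choose (l + i) * (l + i + d + 1)) := by
            rw [h2]
        _ = m.choose (l + i) * n.choose (k + i + (d + 1)) * ((l + i + d + 1) * (k + i + d + 1)) := by
            rw [show k + i + (d + 1) = k + i + d + 1 by omega]; ring
    exact Nat.le_of_mul_le_mul_right key (by positivity)

lemma choose_cross' (k n l m : ℕ) (hkl : k ≤ l) (hml : m - l ≤ n - k)
    {i j : ℕ} (hij : i ≤ j) :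
    m.choose (l + j) * n.choose (k + i) ≤ m.choose (l + i) * n.choose (k + j) := by
  obtain ⟨d, rfl⟩ := Nat.exists_eq_add_of_le hij
  simpa [← add_assoc] using choose_cross k n l m hkl hml d i

lemma phi_le (s : ℕ) {p q : ℝ} (hp : 0 < p) (hp1 : p < 1) (hq1 : q < 1) (hpq : p ≤ q)
    {i j : ℕ} (hij : i ≤ j) (hjs : j ≤ s) :
    p ^ j * (1 - p) ^ (s - j) * (q ^ i * (1 - q) ^ (s - i)) ≤
      p ^ i * (1 - p) ^ (s - i) * (q ^ j * (1 - q) ^ (s - j)) := by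
  obtain ⟨d, rfl⟩ := Nat.exists_eq_add_of_le hij
  have h1 : s - i = (s - (i + d)) + d := by omega
  set a := s - (i + d) with ha
  rw [h1]
  have hq : (0:ℝ) < q := lt_of_lt_of_le hp hpq
  have hbase : p * (1 - q) ≤ (1 - p) * q := by nlinarith
  have hpow : (p * (1 - q)) ^ d ≤ ((1 - p) * q) ^ d :=
    pow_le_pow_left₀ (by nlinarith) hbase d
  have hK : (0:ℝ) ≤ p ^ i * q ^ i * (1 - p) ^ a * (1 - q) ^ a :=
    mul_nonneg (mul_nonneg (mul_nonneg (pow_nonneg hp.le i) (pow_nonneg hq.le i))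
      (pow_nonneg (by linarith) a)) (pow_nonneg (by linarith) a)
  have hm := mul_le_mul_of_nonneg_left hpow hK
  calc p ^ (i + d) * (1 - p) ^ a * (q ^ i * (1 - q) ^ (a + d))
      = (p ^ i * q ^ i * (1 - p) ^ a * (1 - q) ^ a) * (p * (1 - q)) ^ d := by
        rw [pow_add, pow_add, mul_pow]; ring
    _ ≤ (p ^ i * q ^ i * (1 - p) ^ a * (1 - q) ^ a) * ((1 - p) * q) ^ d := hm
    _ = p ^ i * (1 - p) ^ (a + d) * (q ^ (i + d) * (1 - q) ^ a) := by
        rw [pow_add, pow_add, mul_pow]; ring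

lemma key_sum (r : ℕ) (a b u v : ℕ → ℝ)
    (h : ∀ i ∈ Finset.range r, ∀ j ∈ Finset.range r,
        0 ≤ (b i * a j - b j * a i) * (u i * v j - u j * v i)) :
    (∑ i ∈ Finset.range r, b i * v i) * (∑ j ∈ Finset.range r, a j * u j) ≤
      (∑ i ∈ Finset.range r, b i * u i) * (∑ j ∈ Finset.range r, a j * v j) := by
  set R := Finset.range r
  have H : 0 ≤ ∑ i ∈ R, ∑ j ∈ R, (b i * a j - b j * a i) * (u i * v j - u j * v i) :=
    Finset.sum_nonneg fun i hi => Finset.sum_nonneg fun j hj => h i hi j hj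
  have e1 := Finset.sum_mul_sum R R (fun i => b i * u i) (fun j => a j * v j)
  have e2 := Finset.sum_mul_sum R R (fun i => b i * v i) (fun j => a j * u j)
  have e3 := Finset.sum_mul_sum R R (fun i => a i * v i) (fun j => b j * u j)
  have e4 := Finset.sum_mul_sum R R (fun i => a i * u i) (fun j => b j * v j)
  have expand : ∑ i ∈ R, ∑ j ∈ R, (b i * a j - b j * a i) * (u i * v j - u j * v i)
      = 2 * ((∑ i ∈ R, b i * u i) * (∑ j ∈ R, a j * v j)
          - (∑ i ∈ R, b i * v i) * (∑ j ∈ R, a j * u j)) := by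
    calc ∑ i ∈ R, ∑ j ∈ R, (b i * a j - b j * a i) * (u i * v j - u j * v i)
        = ∑ i ∈ R, ∑ j ∈ R, ((b i * u i) * (a j * v j) + (a i * v i) * (b j * u j)
            - ((b i * v i) * (a j * u j) + (a i * u i) * (b j * v j))) := by
          refine Finset.sum_congr rfl fun i _ => Finset.sum_congr rfl fun j _ => by ring
      _ = ((∑ i ∈ R, b i * u i) * (∑ j ∈ R, a j * v j)
            + (∑ i ∈ R, a i * v i) * (∑ j ∈ R, b j * u j))
          - ((∑ i ∈ R, b i * v i) * (∑ j ∈ R, a j * u j)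
            + (∑ i ∈ R, a i * u i) * (∑ j ∈ R, b j * v j)) := by
          simp only [Finset.sum_sub_distrib, Finset.sum_add_distrib]
          rw [← e1, ← e2, ← e3, ← e4]
      _ = 2 * ((∑ i ∈ R, b i * u i) * (∑ j ∈ R, a j * v j)
          - (∑ i ∈ R, b i * v i) * (∑ j ∈ R, a j * u j)) := by
          have hc : (∑ i ∈ R, a i * v i) * (∑ j ∈ R, b j * u j)
              = (∑ i ∈ R, b i * u i) * (∑ j ∈ R, a j * v j) := by ring
          have hd : (∑ i ∈ R, a i * u i) * (∑ j ∈ R, b j * v j)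
              = (∑ i ∈ R, b i * v i) * (∑ j ∈ R, a j * u j) := by ring
          rw [hc, hd]; ring
  rw [expand] at H
  linarith

lemma hkn_eq_range (k n r : ℕ) (hk : k ≤ n) (hr : n + 1 - k ≤ r) (x : ℝ) :
    hkn k n x = ∑ i ∈ Finset.range r,
      (n.choose (k + i) : ℝ) * x ^ (k + i) * (1 - x) ^ (n - (k + i)) := by
  rw [hkn, show Finset.Icc k n = Finset.Ico k (n + 1) by rw [Finset.Ico_add_one_right_eq_Icc],
    Finset.sum_Ico_eq_sum_range]
  refine Finset.sum_subset (Finset.range_subset_range.2 hr) fun i hi hni => ?_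
  rw [Finset.mem_range, not_lt] at hni
  have : n < k + i := by omega
  simp [Nat.choose_eq_zero_of_lt this]

lemma expand_gen (a b c d r e s : ℕ) (ha1 : 1 ≤ a) (hab : a ≤ b) (hcd : c ≤ d)
    (hr : d + 1 - c ≤ r) (he : e = a + c - 1) (hs : s = b + d - 1) (x : ℝ) :
    x ^ (a - 1) * (1 - x) ^ (b - a) * hkn c d x
      = ∑ i ∈ Finset.range r, (d.choose (c + i) : ℝ) *
          (x ^ (e + i) * (1 - x) ^ (s - (e + i))) := by
  rw [hkn_eq_range c d r hcd hr x, Finset.mul_sum]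
  refine Finset.sum_congr rfl fun i _ => ?_
  rcases le_or_gt (c + i) d with h | h
  · have e1 : (a - 1) + (c + i) = e + i := by omega
    have e2 : (b - a) + (d - (c + i)) = s - (e + i) := by omega
    rw [← e2, ← e1, pow_add, pow_add]
    ring
  · simp [Nat.choose_eq_zero_of_lt h]

lemma mul_choose_eq (n i : ℕ) (hn : 1 ≤ n) (hi : 1 ≤ i) :
    i * n.choose i = n * (n - 1).choose (i - 1) := by
  obtain ⟨i', rfl⟩ := Nat.exists_eq_add_of_le hi
  obtain ⟨n', rfl⟩ := Nat.exists_eq_add_of_le hn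
  simp only [Nat.add_sub_cancel_left]
  have h := Nat.add_one_mul_choose_eq n' i'
  calc (1 + i') * (1 + n').choose (1 + i')
      = (n' + 1).choose (i' + 1) * (i' + 1) := by rw [Nat.add_comm 1 i', Nat.add_comm 1 n']; ring
    _ = (n' + 1) * n'.choose i' := h.symm
    _ = (1 + n') * n'.choose i' := by ring

lemma sub_mul_choose_eq (n i : ℕ) (hn : 1 ≤ n) :
    (n - i) * n.choose i = n * (n - 1).choose i := by
  have ha := Nat.choose_succ_right_eq n i
  have hb : (i + 1) * n.choose (i + 1) = n * (n - 1).choose i := by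
    simpa using mul_choose_eq n (i + 1) hn (by omega)
  calc (n - i) * n.choose i = n.choose i * (n - i) := by ring
    _ = n.choose (i + 1) * (i + 1) := ha.symm
    _ = (i + 1) * n.choose (i + 1) := by ring
    _ = n * (n - 1).choose i := hb

lemma hasDerivAt_hkn (k n : ℕ) (hk : 1 ≤ k) (hkn' : k ≤ n) (p : ℝ) :
    HasDerivAt (hkn k n)
      ((n : ℝ) * ((n - 1).choose (k - 1) : ℝ) * p ^ (k - 1) * (1 - p) ^ (n - k)) p := by
  have hderiv : ∀ i ∈ Finset.Icc k n, HasDerivAt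
      (fun x : ℝ => (n.choose i : ℝ) * x ^ i * (1 - x) ^ (n - i))
      ((n.choose i : ℝ) * ((i : ℝ) * p ^ (i - 1) * (1 - p) ^ (n - i)
        - ((n - i : ℕ) : ℝ) * p ^ i * (1 - p) ^ (n - i - 1))) p := by
    intro i _
    have h1 : HasDerivAt (fun x : ℝ => x ^ i) ((i : ℝ) * p ^ (i - 1)) p := hasDerivAt_pow i p
    have hin : HasDerivAt (fun x : ℝ => 1 - x) (-1) p := (hasDerivAt_id p).const_sub 1
    have h2 : HasDerivAt (fun x : ℝ => (1 - x) ^ (n - i))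
        ((((n - i : ℕ) : ℝ) * (1 - p) ^ (n - i - 1)) * (-1)) p :=
      (hasDerivAt_pow (n - i) (1 - p)).comp p hin
    have h3 := (h1.const_mul (n.choose i : ℝ)).mul h2
    refine h3.congr_deriv ?_
    ring
  have hsum := HasDerivAt.fun_sum hderiv
  have heq : (fun y => ∑ i ∈ Finset.Icc k n, (n.choose i : ℝ) * y ^ i * (1 - y) ^ (n - i))
      = hkn k n := rfl
  rw [heq] at hsum
  refine hsum.congr_deriv (Eq.symm ?_)
  set T : ℕ → ℝ :=
    fun i => (n : ℝ) * ((n - 1).choose (i - 1) : ℝ) * p ^ (i - 1) * (1 - p) ^ (n - i) with hT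
  have hn1 : 1 ≤ n := le_trans hk hkn'
  have hterm : ∀ i ∈ Finset.Icc k n,
      (n.choose i : ℝ) * ((i : ℝ) * p ^ (i - 1) * (1 - p) ^ (n - i)
        - ((n - i : ℕ) : ℝ) * p ^ i * (1 - p) ^ (n - i - 1)) = T i - T (i + 1) := by
    intro i hi
    rw [Finset.mem_Icc] at hi
    have hi1 : 1 ≤ i := le_trans hk hi.1
    have c1 : ((i : ℝ)) * (n.choose i : ℝ) = (n : ℝ) * ((n - 1).choose (i - 1) : ℝ) := by
      exact_mod_cast congrArg (Nat.cast : ℕ → ℝ) (mul_choose_eq n i hn1 hi1)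
    have c2 : (((n - i : ℕ)) : ℝ) * (n.choose i : ℝ) = (n : ℝ) * ((n - 1).choose i : ℝ) := by
      exact_mod_cast congrArg (Nat.cast : ℕ → ℝ) (sub_mul_choose_eq n i hn1)
    have hTi1 : T (i + 1) = (n : ℝ) * ((n - 1).choose i : ℝ) * p ^ i * (1 - p) ^ (n - i - 1) := by
      rw [hT]
      simp only [Nat.add_sub_cancel]
      rw [show n - (i + 1) = n - i - 1 by omega]
    rw [hTi1, hT]
    simp only
    linear_combination (p ^ (i - 1) * (1 - p) ^ (n - i)) * c1
      - (p ^ i * (1 - p) ^ (n - i - 1)) * c2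
  rw [Finset.sum_congr rfl hterm,
    show Finset.Icc k n = Finset.Ico k (n + 1) by rw [Finset.Ico_add_one_right_eq_Icc],
    Finset.sum_Ico_eq_sum_range]
  have htel : ∑ i ∈ Finset.range (n + 1 - k), (T (k + i) - T (k + i + 1))
      = T k - T (k + (n + 1 - k)) := by
    have := Finset.sum_range_sub' (fun i => T (k + i)) (n + 1 - k)
    simpa [add_assoc] using this
  rw [htel, show k + (n + 1 - k) = n + 1 by omega]
  have hTn : T (n + 1) = 0 := by
    rw [hT]
    simp only [Nat.add_sub_cancel]
    rw [Nat.choose_eq_zero_of_lt (by omega : n - 1 < n)]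
    simp
  rw [hTn, hT]
  simp

lemma hkn_pos (k n : ℕ) (hk : k ≤ n) {x : ℝ} (hx : x ∈ Set.Ioo (0:ℝ) 1) : 0 < hkn k n x := by
  obtain ⟨h0, h1⟩ := hx
  have h1' : (0:ℝ) < 1 - x := by linarith
  apply Finset.sum_pos'
  · intro i _
    have : (0:ℝ) ≤ (n.choose i : ℝ) := Nat.cast_nonneg _
    positivity
  · refine ⟨n, Finset.mem_Icc.2 ⟨hk, le_refl n⟩, ?_⟩
    simp only [Nat.choose_self, Nat.cast_one, Nat.sub_self, pow_zero, one_mul, mul_one]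
    positivity

lemma Hkn_eq (k n : ℕ) (hk : 1 ≤ k) (hkn' : k ≤ n) (x : ℝ) :
    Hkn k n x = x * ((n : ℝ) * ((n - 1).choose (k - 1) : ℝ) * x ^ (k - 1) * (1 - x) ^ (n - k))
      / hkn k n x := by
  rw [Hkn, (hasDerivAt_hkn k n hk hkn' x).deriv]

lemma Hkn_pos (k n : ℕ) (hk : 1 ≤ k) (hkn' : k ≤ n) {x : ℝ} (hx : x ∈ Set.Ioo (0:ℝ) 1) :
    0 < Hkn k n x := by
  obtain ⟨h0, h1⟩ := hx
  have h1' : (0:ℝ) < 1 - x := by linarith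
  rw [Hkn_eq k n hk hkn' x]
  apply div_pos _ (hkn_pos k n hkn' ⟨h0, h1⟩)
  have hc : (0:ℝ) < ((n - 1).choose (k - 1) : ℝ) :=
    Nat.cast_pos.2 (Nat.choose_pos (by omega))
  have hn : (0:ℝ) < (n : ℝ) := Nat.cast_pos.2 (by omega)
  positivity

/-- Lemma 2.2 (i): `H_{k|n}(p) / H_{l|m}(p)` is decreasing on `(0,1)` for
`k ≤ l` and `m - l ≤ n - k`. -/
theorem Hkn_ratio_antitone
    (k n l m : ℕ)
    (hk1 : 1 ≤ k) (hkn' : k ≤ n) (hl1 : 1 ≤ l) (hlm : l ≤ m)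
    (hkl : k ≤ l) (hml : m - l ≤ n - k) :
    AntitoneOn (fun p => Hkn k n p / Hkn l m p) (Set.Ioo 0 1) := by
  intro p hp q hq hpq
  obtain ⟨hp0, hp1⟩ := hp
  obtain ⟨hq0, hq1⟩ := hq
  have hp1' : (0:ℝ) < 1 - p := by linarith
  have hq1' : (0:ℝ) < 1 - q := by linarith
  simp only
  rw [div_le_div_iff₀ (Hkn_pos l m hl1 hlm ⟨hq0, hq1⟩) (Hkn_pos l m hl1 hlm ⟨hp0, hp1⟩)]
  rw [Hkn_eq k n hk1 hkn', Hkn_eq k n hk1 hkn', Hkn_eq l m hl1 hlm, Hkn_eq l m hl1 hlm]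
  rw [div_mul_div_comm, div_mul_div_comm,
    div_le_div_iff₀
      (mul_pos (hkn_pos k n hkn' ⟨hq0, hq1⟩) (hkn_pos l m hlm ⟨hp0, hp1⟩))
      (mul_pos (hkn_pos k n hkn' ⟨hp0, hp1⟩) (hkn_pos l m hlm ⟨hq0, hq1⟩))]
  set cK : ℝ := (n : ℝ) * ((n - 1).choose (k - 1) : ℝ) with hcK
  set cL : ℝ := (m : ℝ) * ((m - 1).choose (l - 1) : ℝ) with hcL
  have hcKpos : (0:ℝ) ≤ cK := by positivity
  have hcLpos : (0:ℝ) ≤ cL := by positivity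
  -- the key inequality
  have KEY : (q ^ (k - 1) * (1 - q) ^ (n - k) * hkn l m q)
        * (p ^ (l - 1) * (1 - p) ^ (m - l) * hkn k n p)
      ≤ (p ^ (k - 1) * (1 - p) ^ (n - k) * hkn l m p)
        * (q ^ (l - 1) * (1 - q) ^ (m - l) * hkn k n q) := by
    have hr1 : m + 1 - l ≤ n - k + 1 := by omega
    have hr2 : n + 1 - k ≤ n - k + 1 := by omega
    have he2 : k + l - 1 = l + k - 1 := by omega
    have hs2 : n + m - 1 = m + n - 1 := by omega
    rw [expand_gen k n l m (n - k + 1) (k + l - 1) (n + m - 1) hk1 hkn' hlm hr1 rfl rfl q,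
      expand_gen l m k n (n - k + 1) (k + l - 1) (n + m - 1) hl1 hlm hkn' hr2 he2 hs2 p,
      expand_gen k n l m (n - k + 1) (k + l - 1) (n + m - 1) hk1 hkn' hlm hr1 rfl rfl p,
      expand_gen l m k n (n - k + 1) (k + l - 1) (n + m - 1) hl1 hlm hkn' hr2 he2 hs2 q]
    apply key_sum (n - k + 1)
      (fun j => (n.choose (k + j) : ℝ)) (fun i => (m.choose (l + i) : ℝ))
      (fun i => p ^ (k + l - 1 + i) * (1 - p) ^ (n + m - 1 - (k + l - 1 + i)))
      (fun i => q ^ (k + l - 1 + i) * (1 - q) ^ (n + m - 1 - (k + l - 1 + i)))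
    intro i hi j hj
    rw [Finset.mem_range] at hi hj
    rcases le_total i j with hij | hij
    · have hb : (m.choose (l + j) : ℝ) * (n.choose (k + i) : ℝ)
          ≤ (m.choose (l + i) : ℝ) * (n.choose (k + j) : ℝ) := by
        exact_mod_cast choose_cross' k n l m hkl hml hij
      have hu := phi_le (n + m - 1) hp0 hp1 hq1 hpq
        (Nat.add_le_add_left hij (k + l - 1)) (by omega : k + l - 1 + j ≤ n + m - 1)
      exact mul_nonneg (by simpa using sub_nonneg.2 hb) (sub_nonneg.2 hu)
    · have hb : (m.choose (l + i) : ℝ) * (n.choose (k + j) : ℝ)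
          ≤ (m.choose (l + j) : ℝ) * (n.choose (k + i) : ℝ) := by
        exact_mod_cast choose_cross' k n l m hkl hml hij
      have hu := phi_le (n + m - 1) hp0 hp1 hq1 hpq
        (Nat.add_le_add_left hij (k + l - 1)) (by omega : k + l - 1 + i ≤ n + m - 1)
      rw [← neg_mul_neg]
      exact mul_nonneg (by simpa using sub_nonneg.2 hb) (by simpa using sub_nonneg.2 hu)
  have lhs_eq : q * (cK * q ^ (k - 1) * (1 - q) ^ (n - k))
        * (p * (cL * p ^ (l - 1) * (1 - p) ^ (m - l))) * (hkn k n p * hkn l m q)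
      = (p * q * cK * cL) * ((q ^ (k - 1) * (1 - q) ^ (n - k) * hkn l m q)
        * (p ^ (l - 1) * (1 - p) ^ (m - l) * hkn k n p)) := by ring
  have rhs_eq : p * (cK * p ^ (k - 1) * (1 - p) ^ (n - k))
        * (q * (cL * q ^ (l - 1) * (1 - q) ^ (m - l))) * (hkn k n q * hkn l m p)
      = (p * q * cK * cL) * ((p ^ (k - 1) * (1 - p) ^ (n - k) * hkn l m p)
        * (q ^ (l - 1) * (1 - q) ^ (m - l) * hkn k n q)) := by ring
  rw [lhs_eq, rhs_eq]
  exact mul_le_mul_of_nonneg_left KEY (by positivity)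
end
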